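/- arXiv:2203.06335 — 8 statements merged into one kernel-verified Lean document; each statement's English description precedes it below -/
import Mathlib

section
/- Let s, n, q, p be positive integers with s ≥ 2, s² dividing n and p ≥ 1. If there exist D1 an OA(n,q,s,2) and D2 an LH(n,p) such that (D1,D2) is a doubly coupled design DCD(n,s^q,p), then the n rows of D1 can be partitioned into n/s² groups of s² rows such that each group forms a CROA(s²,q,s,2). -/
/-- An orthogonal array OA(n,m,s,t): an `n × m` array with entries in `{0,…,s-1}`
such that for every choice of `t` distinct columns, every `t`-tuple of levels
occurs exactly `n / s^t` times among the rows. -/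
def IsOA (n m s t : ℕ) (D : ℕ → ℕ → ℕ) : Prop :=
  (∀ r < n, ∀ j < m, D r j < s) ∧
  ∀ f : Fin t → ℕ, (∀ i, f i < m) → Function.Injective f →
    ∀ v : Fin t → ℕ, (∀ i, v i < s) →
      ((Finset.range n).filter (fun r => ∀ i, D r (f i) = v i)).card = n / s ^ t

/-- A Latin hypercube LH(n,m): each column is a permutation of `{0,…,n-1}`. -/
def IsLH (n m : ℕ) (D : ℕ → ℕ → ℕ) : Prop :=
  ∀ j < m, ∀ v < n, ((Finset.range n).filter (fun r => D r j = v)).card = 1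

/-- Doubly coupled design conditions (i) and (ii): for every column of `D1` and each
level, the floors `⌊d/s⌋` of each column of `D2` form a permutation of `{0,…,n/s-1}`,
and for every pair of distinct columns of `D1` and each level combination, the floors
`⌊d/s²⌋` form a permutation of `{0,…,n/s²-1}`. -/
def IsDCD (n s q p : ℕ) (D1 D2 : ℕ → ℕ → ℕ) : Prop :=
  (∀ i < q, ∀ k < p, ∀ a < s, ∀ v < n / s,
    ((Finset.range n).filter (fun r => D1 r i = a ∧ D2 r k / s = v)).card = 1) ∧
  (∀ i < q, ∀ j < q, i ≠ j → ∀ k < p, ∀ a < s, ∀ b < s, ∀ v < n / s ^ 2,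
    ((Finset.range n).filter
      (fun r => D1 r i = a ∧ D1 r j = b ∧ D2 r k / s ^ 2 = v)).card = 1)

/-- Theorem 2, necessity: if a DCD(n,s^q,p) exists then the rows of `D1` can be
partitioned into `n/s²` groups, each a CROA(s²,q,s,2): `g` assigns rows to groups,
`h` assigns rows to resolution slices within each group. -/
theorem statement1 (s n q p : ℕ) (hs : 2 ≤ s) (hn : 0 < n) (hq : 0 < q) (hp : 1 ≤ p)
    (hdvd : s ^ 2 ∣ n) (D1 D2 : ℕ → ℕ → ℕ)
    (hOA : IsOA n q s 2 D1) (hLH : IsLH n p D2) (hDCD : IsDCD n s q p D1 D2) :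
    ∃ g h : ℕ → ℕ,
      (∀ r < n, g r < n / s ^ 2) ∧ (∀ r < n, h r < s) ∧
      (∀ G < n / s ^ 2, ((Finset.range n).filter (fun r => g r = G)).card = s ^ 2) ∧
      (∀ G < n / s ^ 2, ∀ i < q, ∀ j < q, i ≠ j → ∀ a < s, ∀ b < s,
        ((Finset.range n).filter
          (fun r => g r = G ∧ D1 r i = a ∧ D1 r j = b)).card = 1) ∧
      (∀ G < n / s ^ 2, ∀ l < s, ∀ i < q, ∀ a < s,
        ((Finset.range n).filter
          (fun r => g r = G ∧ h r = l ∧ D1 r i = a)).card = 1) := by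
  obtain ⟨m, hm⟩ := hdvd
  have hs0 : 0 < s := by omega
  have hs2 : 0 < s ^ 2 := pow_pos hs0 2
  have hm0 : 0 < m := by
    rcases Nat.eq_zero_or_pos m with h | h
    · subst h; simp [hm] at hn
    · exact h
  have hns2 : n / s ^ 2 = m := by rw [hm, Nat.mul_div_cancel_left _ hs2]
  have hns : n / s = s * m := by
    rw [hm, pow_two, mul_assoc, Nat.mul_div_cancel_left _ hs0]
  -- every entry of column 0 of D2 is < n
  have hb : ∀ r < n, D2 r 0 < n := by
    have hB : (Finset.range n).biUnion
        (fun v => (Finset.range n).filter fun r => D2 r 0 = v) = Finset.range n := by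
      apply Finset.eq_of_subset_of_card_le
      · intro r hr
        rw [Finset.mem_biUnion] at hr
        obtain ⟨v, _, hr⟩ := hr
        exact (Finset.mem_filter.mp hr).1
      · rw [Finset.card_biUnion]
        · rw [Finset.card_range]
          calc n = ∑ _v ∈ Finset.range n, 1 := by simp
            _ ≤ _ := Finset.sum_le_sum fun v hv => by
                rw [hLH 0 hp v (Finset.mem_range.mp hv)]
        · intro x _ y _ hxy
          simp only [Finset.disjoint_left, Finset.mem_filter]
          rintro r ⟨_, h1⟩ ⟨_, h2⟩
          exact hxy (h1 ▸ h2 ▸ rfl)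
    intro r hr
    have : r ∈ (Finset.range n).biUnion
        (fun v => (Finset.range n).filter fun r => D2 r 0 = v) := by
      rw [hB]; exact Finset.mem_range.mpr hr
    rw [Finset.mem_biUnion] at this
    obtain ⟨v, hv, hrv⟩ := this
    rw [(Finset.mem_filter.mp hrv).2]
    exact Finset.mem_range.mp hv
  refine ⟨fun r => D2 r 0 / s ^ 2, fun r => D2 r 0 / s % s, ?_, ?_, ?_, ?_, ?_⟩
  · intro r hr
    rw [hns2]
    rw [Nat.div_lt_iff_lt_mul hs2, mul_comm, ← hm]
    exact hb r hr
  · intro r _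
    exact Nat.mod_lt _ hs0
  · intro G hG
    rw [hns2] at hG
    have hsplit : (Finset.range n).filter (fun r => D2 r 0 / s ^ 2 = G) =
        (Finset.Ico (G * s ^ 2) ((G + 1) * s ^ 2)).biUnion
          (fun v => (Finset.range n).filter fun r => D2 r 0 = v) := by
      ext r
      simp only [Finset.mem_filter, Finset.mem_biUnion, Finset.mem_Ico]
      constructor
      · rintro ⟨hr, hg⟩
        refine ⟨D2 r 0, ⟨?_, ?_⟩, hr, rfl⟩
        · rw [← hg]; exact Nat.div_mul_le_self _ _
        · rw [← Nat.div_lt_iff_lt_mul hs2, hg]; omega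
      · rintro ⟨v, ⟨hle, hlt⟩, hr, hv⟩
        subst hv
        refine ⟨hr, ?_⟩
        have h1 : G ≤ D2 r 0 / s ^ 2 := (Nat.le_div_iff_mul_le hs2).mpr hle
        have h2 : D2 r 0 / s ^ 2 < G + 1 := (Nat.div_lt_iff_lt_mul hs2).mpr hlt
        omega
    rw [hsplit, Finset.card_biUnion]
    · have hn' : ∀ v ∈ Finset.Ico (G * s ^ 2) ((G + 1) * s ^ 2),
          ((Finset.range n).filter fun r => D2 r 0 = v).card = 1 := by
        intro v hv
        rw [Finset.mem_Ico] at hv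
        apply hLH 0 hp v
        calc v < (G + 1) * s ^ 2 := hv.2
          _ ≤ m * s ^ 2 := Nat.mul_le_mul_right _ (by omega)
          _ = n := by rw [hm, mul_comm]
      rw [Finset.sum_congr rfl hn']
      simp [Nat.Ico_eq_range', add_one_mul]
    · intro x _ y _ hxy
      simp only [Finset.disjoint_left, Finset.mem_filter]
      rintro r ⟨_, h1⟩ ⟨_, h2⟩
      exact hxy (h1 ▸ h2 ▸ rfl)
  · intro G hG i hi j hj hij a ha b hbb
    have := hDCD.2 i hi j hj hij 0 hp a ha b hbb G hG
    rw [← this]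
    congr 1
    apply Finset.filter_congr
    intro r _
    constructor
    · rintro ⟨h1, h2, h3⟩; exact ⟨h2, h3, h1⟩
    · rintro ⟨h1, h2, h3⟩; exact ⟨h3, h1, h2⟩
  · intro G hG l hl i hi a ha
    rw [hns2] at hG
    have hv : G * s + l < n / s := by
      rw [hns]
      calc G * s + l < G * s + s := by omega
        _ = (G + 1) * s := by ring
        _ ≤ m * s := Nat.mul_le_mul_right _ (by omega)
        _ = s * m := mul_comm _ _
    have := hDCD.1 i hi 0 hp a ha (G * s + l) hv
    rw [← this]
    congr 1
    apply Finset.filter_congr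
    intro r _
    have key : (D2 r 0 / s ^ 2 = G ∧ D2 r 0 / s % s = l) ↔ D2 r 0 / s = G * s + l := by
      have hdd : D2 r 0 / s ^ 2 = D2 r 0 / s / s := by
        rw [Nat.div_div_eq_div_mul, pow_two]
      rw [hdd]
      constructor
      · rintro ⟨h1, h2⟩
        have h3 := Nat.div_add_mod (D2 r 0 / s) s
        rw [h1, h2] at h3
        rw [← h3, mul_comm]
      · intro h4
        rw [h4]
        constructor
        · rw [mul_comm G s, Nat.mul_add_div hs0, Nat.div_eq_of_lt hl]; omega
        · rw [mul_comm G s, Nat.mul_add_mod, Nat.mod_eq_of_lt hl]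
    constructor
    · rintro ⟨h1, h2, h3⟩; exact ⟨h3, key.mp ⟨h1, h2⟩⟩
    · rintro ⟨h1, h2⟩
      have := key.mpr h2
      exact ⟨this.1, this.2, h1⟩
end

section
/- Let s, n, q be positive integers with s ≥ 2 and s² dividing n. Suppose D1 is an OA(n,q,s,2) whose n rows can be partitioned into n/s² groups of s² rows, each group forming a CROA(s²,q,s,2). Then for every positive integer p there exists an LH(n,p) D2 such that (D1,D2) is a doubly coupled design DCD(n,s^q,p). In particular, if the rows of D1 are ordered so that for each i = 1,…,n/s² the i-th group occupies rows (i−1)s²+1,…,is² and within each group the j-th resolution slice (an OA(s,q,s,1)) occupies rows (i−1)s²+(j−1)s+1,…,(i−1)s²+js for j = 1,…,s, then the single column d = (0,1,…,n−1)^T makes (D1,d) a DCD(n,s^q,1). -/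
private lemma fiber_card_one {A : Finset ℕ} {f : ℕ → ℕ} {m : ℕ}
    (hcard : A.card = m) (hlt : ∀ a ∈ A, f a < m)
    (hinj : Set.InjOn f A) {c : ℕ} (hc : c < m) :
    (A.filter (fun a => f a = c)).card = 1 := by
  have himg : A.image f = Finset.range m := by
    apply Finset.eq_of_subset_of_card_le
    · intro x hx
      simp only [Finset.mem_image] at hx
      obtain ⟨a, ha, rfl⟩ := hx
      exact Finset.mem_range.2 (hlt a ha)
    · rw [Finset.card_range, Finset.card_image_of_injOn hinj, hcard]
  have hcm : c ∈ A.image f := himg ▸ Finset.mem_range.2 hc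
  obtain ⟨a, ha, hfa⟩ := Finset.mem_image.1 hcm
  refine le_antisymm (Finset.card_le_one.2 ?_) ?_
  · intro x hx y hy
    simp only [Finset.mem_filter] at hx hy
    exact hinj hx.1 hy.1 (hx.2.trans hy.2.symm)
  · exact Finset.card_pos.2 ⟨a, Finset.mem_filter.2 ⟨ha, hfa⟩⟩

private lemma dcd_aux (s n q p : ℕ) (hs : 0 < s) (hdvd : s ^ 2 ∣ n)
    (D1 : ℕ → ℕ → ℕ) (g h : ℕ → ℕ)
    (hh : ∀ r < n, h r < s)
    (hcroa : ∀ G < n / s ^ 2, ∀ i < q, ∀ j < q, i ≠ j → ∀ a < s, ∀ b < s,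
      ((Finset.range n).filter
        (fun r => g r = G ∧ D1 r i = a ∧ D1 r j = b)).card = 1)
    (hres : ∀ G < n / s ^ 2, ∀ l < s, ∀ i < q, ∀ a < s,
      ((Finset.range n).filter
        (fun r => g r = G ∧ h r = l ∧ D1 r i = a)).card = 1)
    (D2 : ℕ → ℕ → ℕ)
    (h1 : ∀ r < n, ∀ k < p, D2 r k / s = g r * s + h r) :
    IsDCD n s q p D1 D2 := by
  have hns : n / s = (n / s ^ 2) * s := by
    have hn' : n = n / s ^ 2 * s * s := by
      rw [mul_assoc, ← pow_two, Nat.div_mul_cancel hdvd]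
    calc n / s = (n / s ^ 2 * s * s) / s := by rw [← hn']
    _ = n / s ^ 2 * s := Nat.mul_div_cancel _ hs
  have h2 : ∀ r < n, ∀ k < p, D2 r k / s ^ 2 = g r := by
    intro r hr k hk
    rw [pow_two, ← Nat.div_div_eq_div_mul, h1 r hr k hk, mul_comm,
      Nat.mul_add_div hs, Nat.div_eq_of_lt (hh r hr), add_zero]
  constructor
  · intro i hi k hk a ha v hv
    have hGlt : v / s < n / s ^ 2 := by
      rw [Nat.div_lt_iff_lt_mul hs]
      rw [hns] at hv
      exact hv
    have hl : v % s < s := Nat.mod_lt _ hs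
    have hset : (Finset.range n).filter (fun r => D1 r i = a ∧ D2 r k / s = v)
        = (Finset.range n).filter (fun r => g r = v / s ∧ h r = v % s ∧ D1 r i = a) := by
      apply Finset.filter_congr
      intro r hr
      rw [Finset.mem_range] at hr
      rw [h1 r hr k hk]
      constructor
      · rintro ⟨hD, hv'⟩
        refine ⟨?_, ?_, hD⟩
        · rw [← hv', mul_comm, Nat.mul_add_div hs, Nat.div_eq_of_lt (hh r hr), add_zero]
        · rw [← hv', mul_comm, Nat.mul_add_mod, Nat.mod_eq_of_lt (hh r hr)]
      · rintro ⟨hG, hl', hD⟩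
        refine ⟨hD, ?_⟩
        rw [hG, hl', mul_comm]
        exact Nat.div_add_mod v s
    rw [hset]
    exact hres (v / s) hGlt (v % s) hl i hi a ha
  · intro i hi j hj hij k hk a ha b hb v hv
    have hset : (Finset.range n).filter
        (fun r => D1 r i = a ∧ D1 r j = b ∧ D2 r k / s ^ 2 = v)
        = (Finset.range n).filter (fun r => g r = v ∧ D1 r i = a ∧ D1 r j = b) := by
      apply Finset.filter_congr
      intro r hr
      rw [Finset.mem_range] at hr
      rw [h2 r hr k hk]
      tauto
    rw [hset]
    exact hcroa v hv i hi j hj hij a ha b hb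
/-- Theorem 2, sufficiency: if `D1` partitions into `n/s²` CROA(s²,q,s,2)'s
(group assignment `g`, slice assignment `h`), then for every `p ≥ 1` a suitable
`D2` exists; in particular, when groups and slices are arranged along consecutive
rows, the column `d r = r` yields a DCD(n,s^q,1). -/
theorem statement2 (s n q : ℕ) (hs : 2 ≤ s) (hn : 0 < n) (hq : 0 < q)
    (hdvd : s ^ 2 ∣ n) (D1 : ℕ → ℕ → ℕ) (hOA : IsOA n q s 2 D1)
    (g h : ℕ → ℕ)
    (hg : ∀ r < n, g r < n / s ^ 2) (hh : ∀ r < n, h r < s)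
    (hsize : ∀ G < n / s ^ 2, ((Finset.range n).filter (fun r => g r = G)).card = s ^ 2)
    (hcroa : ∀ G < n / s ^ 2, ∀ i < q, ∀ j < q, i ≠ j → ∀ a < s, ∀ b < s,
      ((Finset.range n).filter
        (fun r => g r = G ∧ D1 r i = a ∧ D1 r j = b)).card = 1)
    (hres : ∀ G < n / s ^ 2, ∀ l < s, ∀ i < q, ∀ a < s,
      ((Finset.range n).filter
        (fun r => g r = G ∧ h r = l ∧ D1 r i = a)).card = 1) :
    (∀ p, 0 < p → ∃ D2 : ℕ → ℕ → ℕ, IsLH n p D2 ∧ IsDCD n s q p D1 D2) ∧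
    ((∀ r < n, g r = r / s ^ 2 ∧ h r = r % s ^ 2 / s) →
      IsDCD n s q 1 D1 (fun r _ => r)) := by
  have hs0 : 0 < s := by omega
  constructor
  · -- Part 1
    intro p hp
    -- class of a row, and index within class
    set C : ℕ → ℕ → Finset ℕ :=
      fun G l => (Finset.range n).filter (fun r => g r = G ∧ h r = l) with hC
    have hCcard : ∀ r < n, (C (g r) (h r)).card = s := by
      intro r hr
      have hunion : C (g r) (h r) = (Finset.range s).biUnion
          (fun a => (Finset.range n).filter
            (fun r' => g r' = g r ∧ h r' = h r ∧ D1 r' 0 = a)) := by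
        ext x
        simp only [hC, Finset.mem_filter, Finset.mem_biUnion, Finset.mem_range]
        constructor
        · rintro ⟨hx, hgx, hhx⟩
          exact ⟨D1 x 0, hOA.1 x hx 0 hq, hx, hgx, hhx, rfl⟩
        · rintro ⟨a, -, hx, hgx, hhx, -⟩
          exact ⟨hx, hgx, hhx⟩
      rw [hunion, Finset.card_biUnion]
      · have : ∀ a ∈ Finset.range s,
            ((Finset.range n).filter
              (fun r' => g r' = g r ∧ h r' = h r ∧ D1 r' 0 = a)).card = 1 := by
          intro a haa
          exact hres (g r) (hg r hr) (h r) (hh r hr) 0 hq a (Finset.mem_range.1 haa)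
        rw [Finset.sum_congr rfl this]
        simp
      · intro a _ b _ hab
        simp only [Finset.disjoint_left, Finset.mem_filter]
        rintro x ⟨-, -, -, hxa⟩ ⟨-, -, -, hxb⟩
        exact hab (hxa ▸ hxb ▸ rfl)
    set e : ℕ → ℕ :=
      fun r => ((Finset.range r).filter (fun r' => g r' = g r ∧ h r' = h r)).card with he
    have heLt : ∀ r < n, e r < s := by
      intro r hr
      have hsub : (Finset.range r).filter (fun r' => g r' = g r ∧ h r' = h r)
          ⊆ (C (g r) (h r)).erase r := by
        intro x hx
        simp only [Finset.mem_filter, Finset.mem_range] at hx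
        refine Finset.mem_erase.2 ⟨by omega, ?_⟩
        simp only [hC, Finset.mem_filter, Finset.mem_range]
        exact ⟨by omega, hx.2⟩
      have hrmem : r ∈ C (g r) (h r) := by
        simp [hC, hr]
      have := Finset.card_le_card hsub
      rw [Finset.card_erase_of_mem hrmem, hCcard r hr] at this
      have hgoal : e r = ((Finset.range r).filter
          (fun r' => g r' = g r ∧ h r' = h r)).card := rfl
      omega
    have heInj : ∀ r1 < n, ∀ r2 < n, g r1 = g r2 → h r1 = h r2 → e r1 = e r2 → r1 = r2 := by
      intro r1 hr1 r2 hr2 hg12 hh12 he12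
      by_contra hne
      -- wlog r1 < r2
      have key : ∀ a b : ℕ, a < b → g a = g b → h a = h b → e a < e b := by
        intro a b hab hgab hhab
        have hsub : insert a ((Finset.range a).filter (fun r' => g r' = g a ∧ h r' = h a))
            ⊆ (Finset.range b).filter (fun r' => g r' = g b ∧ h r' = h b) := by
          intro x hx
          rcases Finset.mem_insert.1 hx with rfl | hx
          · exact Finset.mem_filter.2 ⟨Finset.mem_range.2 hab, hgab, hhab⟩
          · simp only [Finset.mem_filter, Finset.mem_range] at hx ⊢
            exact ⟨by omega, hx.2.1.trans hgab, hx.2.2.trans hhab⟩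
        have hnotmem : a ∉ (Finset.range a).filter (fun r' => g r' = g a ∧ h r' = h a) := by
          simp
        have := Finset.card_le_card hsub
        rw [Finset.card_insert_of_notMem hnotmem] at this
        simpa [he] using this
      rcases Nat.lt_or_ge r1 r2 with hlt | hge
      · exact absurd he12 (Nat.ne_of_lt (key r1 r2 hlt hg12 hh12))
      · have hlt : r2 < r1 := by omega
        exact absurd he12.symm (Nat.ne_of_lt (key r2 r1 hlt hg12.symm hh12.symm))
    set d : ℕ → ℕ := fun r => g r * s ^ 2 + h r * s + e r with hd
    have hrem : ∀ r < n, h r * s + e r < s ^ 2 := by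
      intro r hr
      have h1 := hh r hr
      have h2 := heLt r hr
      have : h r * s + e r < (h r + 1) * s := by
        rw [add_mul, one_mul]; omega
      have h3 : (h r + 1) * s ≤ s * s := by
        apply Nat.mul_le_mul_right; omega
      rw [pow_two]; omega
    have hdlt : ∀ r < n, d r < n := by
      intro r hr
      have h1 : d r < (g r + 1) * s ^ 2 := by
        have := hrem r hr
        simp only [hd, add_mul, one_mul, add_assoc]
        omega
      have h2 : (g r + 1) * s ^ 2 ≤ (n / s ^ 2) * s ^ 2 := by
        apply Nat.mul_le_mul_right
        exact hg r hr
      rw [Nat.div_mul_cancel hdvd] at h2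
      omega
    have hdiv2 : ∀ r < n, d r / s ^ 2 = g r := by
      intro r hr
      have : d r = s ^ 2 * g r + (h r * s + e r) := by simp only [hd]; ring
      rw [this, Nat.mul_add_div (by positivity), Nat.div_eq_of_lt (hrem r hr), add_zero]
    have hdiv1 : ∀ r < n, d r / s = g r * s + h r := by
      intro r hr
      have : d r = s * (g r * s + h r) + e r := by simp only [hd]; ring
      rw [this, Nat.mul_add_div hs0, Nat.div_eq_of_lt (heLt r hr), add_zero]
    have hdInj : Set.InjOn d (Finset.range n) := by
      intro r1 hr1 r2 hr2 hd12
      simp only [Finset.coe_range, Set.mem_Iio] at hr1 hr2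
      have hg12 : g r1 = g r2 := by
        have := congrArg (· / s ^ 2) hd12
        simpa [hdiv2 r1 hr1, hdiv2 r2 hr2] using this
      have hh12 : h r1 = h r2 := by
        have := congrArg (· / s) hd12
        simp only [hdiv1 r1 hr1, hdiv1 r2 hr2, hg12] at this
        omega
      have he12 : e r1 = e r2 := by
        simp only [hd, hg12, hh12] at hd12
        omega
      exact heInj r1 hr1 r2 hr2 hg12 hh12 he12
    refine ⟨fun r _ => d r, ?_, ?_⟩
    · intro j _ v hv
      exact fiber_card_one (Finset.card_range n) (fun a ha => hdlt a (Finset.mem_range.1 ha))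
        hdInj hv
    · exact dcd_aux s n q p hs0 hdvd D1 g h hh hcroa hres _
        (fun r hr k _ => hdiv1 r hr)
  · -- Part 2
    intro hgh
    apply dcd_aux s n q 1 hs0 hdvd D1 g h hh hcroa hres
    intro r hr k _
    obtain ⟨hgr, hhr⟩ := hgh r hr
    rw [hgr, hhr]
    have hrw : r = s * (r / s ^ 2 * s) + r % s ^ 2 := by
      have h2 : s * (r / s ^ 2 * s) = s ^ 2 * (r / s ^ 2) := by ring
      rw [h2]
      exact (Nat.div_add_mod r (s ^ 2)).symm
    calc r / s = (s * (r / s ^ 2 * s) + r % s ^ 2) / s := by rw [← hrw]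
    _ = r / s ^ 2 * s + r % s ^ 2 / s := Nat.mul_add_div hs0 _ _
end

section
/- Let s, n, q, p be positive integers with s ≥ 2, s² dividing n and p ≥ 1. If there exist D1 an OA(n,q,s,2) and D2 an LH(n,p) such that (D1,D2) is a doubly coupled design DCD(n,s^q,p), then q ≤ s. -/
/-- Corollary 1: in a DCD with `D1` an OA(n,q,s,2), the number of qualitative
factors satisfies `q ≤ s`. -/
theorem statement4 (s n q p : ℕ) (hs : 2 ≤ s) (hn : 0 < n) (hq : 0 < q) (hp : 1 ≤ p)
    (hdvd : s ^ 2 ∣ n) (D1 D2 : ℕ → ℕ → ℕ)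
    (hOA : IsOA n q s 2 D1) (hLH : IsLH n p D2) (hDCD : IsDCD n s q p D1 D2) :
    q ≤ s := by
  have hs0 : 0 < s := by omega
  -- extended columns: columns of D1, plus column q = ⌊D2 r 0 / s⌋
  set col : ℕ → ℕ → ℕ := fun c r => if c < q then D1 r c else D2 r 0 / s with hcol
  set T : Finset ℕ := (Finset.range n).filter (fun r => D2 r 0 / s ^ 2 = 0) with hT
  have hsn : s ^ 2 ≤ n := Nat.le_of_dvd hn hdvd
  have hsns : s ≤ n / s := by
    rw [Nat.le_div_iff_mul_le hs0]
    calc s * s = s ^ 2 := (sq s).symm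
    _ ≤ n := hsn
  -- boundedness of columns on T
  have hbdd : ∀ r ∈ T, ∀ c < q + 1, col c r < s := by
    intro r hr c hc
    simp only [hT, Finset.mem_filter, Finset.mem_range] at hr
    by_cases h : c < q
    · simpa [hcol, h] using hOA.1 r hr.1 c h
    · simp only [hcol, h, if_false]
      have h2 : D2 r 0 / s / s = 0 := by
        rw [Nat.div_div_eq_div_mul, ← sq]; exact hr.2
      exact (Nat.div_eq_zero_iff.mp h2).resolve_left (by omega)
  -- pairwise orthogonality on T
  have hpair : ∀ c < q + 1, ∀ c' < q + 1, c ≠ c' → ∀ a < s, ∀ b < s,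
      (T.filter (fun r => col c r = a ∧ col c' r = b)).card = 1 := by
    intro c hc c' hc' hne a ha b hb
    by_cases h1 : c < q
    · by_cases h2 : c' < q
      · have := hDCD.2 c h1 c' h2 hne 0 hp a ha b hb 0
          (Nat.div_pos hsn (by positivity))
        rw [← this]
        congr 1
        ext r
        simp only [hT, hcol, Finset.mem_filter, Finset.mem_range, h1, h2, if_true]
        tauto
      · have hc'q : c' = q := by omega
        have := hDCD.1 c h1 0 hp a ha b (lt_of_lt_of_le hb hsns)
        rw [← this]
        congr 1
        ext r
        simp only [hT, hcol, Finset.mem_filter, Finset.mem_range, h1, hc'q,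
          lt_irrefl, if_true, if_false]
        constructor
        · rintro ⟨⟨hrn, -⟩, h3, h4⟩; exact ⟨hrn, h3, h4⟩
        · rintro ⟨hrn, h3, h4⟩
          refine ⟨⟨hrn, ?_⟩, h3, h4⟩
          rw [sq, ← Nat.div_div_eq_div_mul, h4]
          exact Nat.div_eq_of_lt hb
    · have hcq : c = q := by omega
      have h2 : c' < q := by omega
      have := hDCD.1 c' h2 0 hp b hb a (lt_of_lt_of_le ha hsns)
      rw [← this]
      congr 1
      ext r
      simp only [hT, hcol, Finset.mem_filter, Finset.mem_range, h2, hcq,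
        lt_irrefl, if_true, if_false]
      constructor
      · rintro ⟨⟨hrn, -⟩, h3, h4⟩; exact ⟨hrn, h4, h3⟩
      · rintro ⟨hrn, h3, h4⟩
        refine ⟨⟨hrn, ?_⟩, h4, h3⟩
        rw [sq, ← Nat.div_div_eq_div_mul, h4]
        exact Nat.div_eq_of_lt ha
  -- each level appears exactly s times in each column on T
  have hclass : ∀ c < q + 1, ∀ a < s, (T.filter (fun r => col c r = a)).card = s := by
    intro c hc a ha
    set c' : ℕ := if c < q then q else 0 with hc'
    have hc'lt : c' < q + 1 := by simp only [hc']; split <;> omega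
    have hcc' : c ≠ c' := by simp only [hc']; split <;> omega
    rw [Finset.card_eq_sum_card_fiberwise
      (f := fun r => col c' r) (t := Finset.range s)
      (fun r hr => Finset.mem_range.mpr
        (hbdd r (Finset.mem_of_mem_filter r hr) c' hc'lt))]
    have hfib : ∀ b ∈ Finset.range s,
        ((T.filter (fun r => col c r = a)).filter (fun r => col c' r = b)).card = 1 := by
      intro b hb
      rw [Finset.filter_filter]
      exact hpair c hc c' hc'lt hcc' a ha b (Finset.mem_range.mp hb)
    rw [Finset.sum_congr rfl hfib, Finset.sum_const, Finset.card_range, smul_eq_mul,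
      mul_one]
  -- T has exactly s^2 rows
  have hTcard : T.card = s ^ 2 := by
    rw [Finset.card_eq_sum_card_fiberwise
      (f := fun r => col 0 r) (t := Finset.range s)
      (fun r hr => Finset.mem_range.mpr (hbdd r hr 0 (by omega)))]
    rw [Finset.sum_congr rfl (fun a ha => hclass 0 (Nat.succ_le_succ (Nat.zero_le q)) a (Finset.mem_range.mp ha))]
    rw [Finset.sum_const, Finset.card_range, smul_eq_mul, sq]
  -- pick a distinguished row
  have hTne : T.Nonempty := by
    rw [← Finset.card_pos, hTcard]; positivity
  obtain ⟨r0, hr0⟩ := hTne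
  set E : Finset ℕ := T.erase r0 with hE
  set S : ℕ → Finset ℕ := fun c => E.filter (fun r => col c r = col c r0) with hS
  have hScard : ∀ c < q + 1, (S c).card = s - 1 := by
    intro c hc
    have h1 : S c = (T.filter (fun r => col c r = col c r0)).erase r0 := by
      ext r
      simp only [hS, hE, Finset.mem_filter, Finset.mem_erase]
      tauto
    have hmem : r0 ∈ T.filter (fun r => col c r = col c r0) :=
      Finset.mem_filter.mpr ⟨hr0, rfl⟩
    rw [h1, Finset.card_erase_of_mem hmem,
      hclass c hc (col c r0) (hbdd r0 hr0 c hc)]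
  have hdisj : ∀ c ∈ Finset.range (q + 1), ∀ c' ∈ Finset.range (q + 1),
      c ≠ c' → Disjoint (S c) (S c') := by
    intro c hc c' hc' hne
    rw [Finset.disjoint_left]
    intro r hr hr'
    simp only [hS, hE, Finset.mem_filter, Finset.mem_erase] at hr hr'
    have hcard := hpair c (Finset.mem_range.mp hc) c' (Finset.mem_range.mp hc') hne
      (col c r0) (hbdd r0 hr0 c (Finset.mem_range.mp hc))
      (col c' r0) (hbdd r0 hr0 c' (Finset.mem_range.mp hc'))
    have hrmem : r ∈ T.filter (fun x => col c x = col c r0 ∧ col c' x = col c' r0) :=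
      Finset.mem_filter.mpr ⟨hr.1.2, hr.2, hr'.2⟩
    have hr0mem : r0 ∈ T.filter (fun x => col c x = col c r0 ∧ col c' x = col c' r0) :=
      Finset.mem_filter.mpr ⟨hr0, rfl, rfl⟩
    exact hr.1.1 (Finset.card_le_one.mp (le_of_eq hcard) r hrmem r0 hr0mem)
  have hsum : (q + 1) * (s - 1) ≤ s ^ 2 - 1 := by
    have h1 : ((Finset.range (q + 1)).biUnion S).card
        = ∑ c ∈ Finset.range (q + 1), (S c).card :=
      Finset.card_biUnion hdisj
    have h2 : (Finset.range (q + 1)).biUnion S ⊆ E := by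
      intro r hr
      obtain ⟨c, -, hrc⟩ := Finset.mem_biUnion.mp hr
      exact Finset.mem_of_mem_filter r hrc
    have h3 : E.card = s ^ 2 - 1 := by
      rw [hE, Finset.card_erase_of_mem hr0, hTcard]
    calc (q + 1) * (s - 1) = ∑ c ∈ Finset.range (q + 1), (s - 1) := by
          rw [Finset.sum_const, Finset.card_range, smul_eq_mul]
      _ = ∑ c ∈ Finset.range (q + 1), (S c).card :=
          (Finset.sum_congr rfl (fun c hc => (hScard c (Finset.mem_range.mp hc)).symm))
      _ = ((Finset.range (q + 1)).biUnion S).card := h1.symm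
      _ ≤ E.card := Finset.card_le_card h2
      _ = s ^ 2 - 1 := h3
  -- conclude
  obtain ⟨t, rfl⟩ : ∃ t, s = t + 2 := ⟨s - 2, by omega⟩
  have hsq : (t + 2) ^ 2 - 1 = (t + 3) * (t + 2 - 1) := by
    have e1 : (t + 2) ^ 2 = t ^ 2 + 4 * t + 4 := by ring
    have e2 : (t + 3) * (t + 1) = t ^ 2 + 4 * t + 3 := by ring
    have e3 : t + 2 - 1 = t + 1 := by omega
    rw [e3]
    omega
  rw [hsq] at hsum
  have := Nat.le_of_mul_le_mul_right hsum (by omega : 0 < t + 2 - 1)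
  omega
end

section
/- (Construction 1.) Let s ≥ 2, λ ≥ 1, q ≥ 1, p ≥ 1 and n = λs². For 1 ≤ i ≤ λ let A_i be an OA(s²,q+1,s,2) whose last column equals (0,…,0,1,…,1,…,s−1,…,s−1)^T, i.e., its entry in row (j−1)s+r equals j−1 for 1 ≤ j ≤ s, 1 ≤ r ≤ s. Let D1 be the n×q matrix obtained by stacking A_1,…,A_λ vertically and deleting the last column. For 1 ≤ k ≤ p let v_k be a permutation of (0,1,…,λ−1) and let b_k be the n-vector whose entry in row (i−1)s²+r is v_k(i) for 1 ≤ i ≤ λ, 1 ≤ r ≤ s²; let w_{k,1},…,w_{k,λ} be permutations of (0,1,…,s−1) and let c_k be the n-vector whose entry in row (i−1)s²+(j−1)s+r is w_{k,i}(j) for 1 ≤ i ≤ λ, 1 ≤ j ≤ s, 1 ≤ r ≤ s. Set B = (b_1,…,b_p), C = (c_1,…,c_p). Then for any LH(n,p) D2 with ⌊D2/s⌋ = sB + C, the pair (D1,D2) is a doubly coupled design DCD(λs², s^q, p). -/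
lemma count_split (L m : ℕ) (P : ℕ → Prop) [DecidablePred P] :
    ((Finset.range (L * m)).filter P).card
      = ∑ b ∈ Finset.range L, ((Finset.range m).filter (fun r => P (b * m + r))).card := by
  induction L with
  | zero => simp
  | succ L ih =>
    rw [Finset.sum_range_succ, ← ih, Nat.succ_mul, Finset.range_add, Finset.filter_union,
      Finset.card_union_of_disjoint, Finset.filter_map, Finset.card_map]
    · rfl
    · rw [Finset.disjoint_left]
      intro x hx hx'
      simp only [Finset.mem_filter, Finset.mem_range, Finset.mem_map,
        addLeftEmbedding_apply] at hx hx'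
      obtain ⟨⟨r, hr, hr'⟩, -⟩ := hx'
      omega

lemma perm_lt (N : ℕ) (f : ℕ → ℕ)
    (hf : ∀ t < N, ((Finset.range N).filter (fun i => f i = t)).card = 1) :
    ∀ i < N, f i < N := by
  intro i hi
  have hU : (Finset.range N).biUnion
      (fun t => (Finset.range N).filter (fun i => f i = t)) = Finset.range N := by
    apply Finset.eq_of_subset_of_card_le
    · intro x hx
      simp only [Finset.mem_biUnion, Finset.mem_filter] at hx
      obtain ⟨t, -, hx, -⟩ := hx
      exact hx
    · rw [Finset.card_biUnion, Finset.card_range]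
      · calc N = ∑ _t ∈ Finset.range N, 1 := by simp
          _ ≤ _ := le_of_eq (Finset.sum_congr rfl fun t ht =>
              (hf t (Finset.mem_range.mp ht)).symm)
      · intro t1 h1 t2 h2 hne
        show Disjoint _ _
        rw [Finset.disjoint_left]
        intro x hx hx'
        simp only [Finset.mem_filter] at hx hx'
        exact hne (hx.2 ▸ hx'.2 ▸ rfl)
  have : i ∈ (Finset.range N).biUnion
      (fun t => (Finset.range N).filter (fun i => f i = t)) := by
    rw [hU]; exact Finset.mem_range.mpr hi
  simp only [Finset.mem_biUnion, Finset.mem_filter, Finset.mem_range] at this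
  obtain ⟨t, ht, -, hft⟩ := this
  omega

lemma unique_of_card_one {N t : ℕ} {f : ℕ → ℕ}
    (h : ((Finset.range N).filter (fun i => f i = t)).card = 1) :
    ∃ j, j < N ∧ f j = t ∧ ∀ j', j' < N → f j' = t → j' = j := by
  obtain ⟨a, ha⟩ := Finset.card_eq_one.mp h
  have haa : a ∈ (Finset.range N).filter (fun i => f i = t) := by
    rw [ha]; exact Finset.mem_singleton_self a
  simp only [Finset.mem_filter, Finset.mem_range] at haa
  refine ⟨a, haa.1, haa.2, fun j' hj' hfj' => ?_⟩
  have : j' ∈ (Finset.range N).filter (fun i => f i = t) := by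
    simp [Finset.mem_filter, Finset.mem_range, hj', hfj']
  rw [ha, Finset.mem_singleton] at this
  exact this

lemma OA_pair {s q : ℕ} {A : ℕ → ℕ → ℕ} (hA : IsOA (s^2) (q+1) s 2 A)
    (hs : 0 < s)
    (c1 c2 : ℕ) (h1 : c1 < q+1) (h2 : c2 < q+1) (hne : c1 ≠ c2)
    (a b : ℕ) (ha : a < s) (hb : b < s) :
    ((Finset.range (s^2)).filter (fun r => A r c1 = a ∧ A r c2 = b)).card = 1 := by
  have key := hA.2 ![c1, c2] (by intro i; fin_cases i <;> simp <;> omega)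
    (by intro x y hxy; fin_cases x <;> fin_cases y <;> simp_all)
    ![a, b] (by intro i; fin_cases i <;> simpa)
  have hfilter : (Finset.range (s^2)).filter (fun r => A r c1 = a ∧ A r c2 = b)
      = (Finset.range (s^2)).filter (fun r => ∀ i, A r (![c1, c2] i) = ![a, b] i) := by
    apply Finset.filter_congr
    intro r _
    constructor
    · rintro ⟨hx, hy⟩ i; fin_cases i <;> simpa
    · intro h; exact ⟨h 0, h 1⟩
  rw [hfilter, key, Nat.div_self (by positivity)]

/-- Construction 1 (Proposition 1): stacking `λ` OA(s²,q+1,s,2)'s (with structured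
last column) and defining `⌊D2/s⌋ = sB + C` via permutations yields a DCD(λs²,s^q,p). -/
theorem statement5 (s lam q p n : ℕ) (hs : 2 ≤ s) (hlam : 1 ≤ lam) (hq : 1 ≤ q)
    (hp : 1 ≤ p) (hn : n = lam * s ^ 2)
    (A : ℕ → ℕ → ℕ → ℕ)
    (hAOA : ∀ i < lam, IsOA (s ^ 2) (q + 1) s 2 (A i))
    (hAlast : ∀ i < lam, ∀ r < s ^ 2, A i r q = r / s)
    (D1 : ℕ → ℕ → ℕ)
    (hD1 : ∀ r < n, ∀ c < q, D1 r c = A (r / s ^ 2) (r % s ^ 2) c)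
    (v : ℕ → ℕ → ℕ)
    (hv : ∀ k < p, ∀ t < lam,
      ((Finset.range lam).filter (fun i => v k i = t)).card = 1)
    (w : ℕ → ℕ → ℕ → ℕ)
    (hw : ∀ k < p, ∀ i < lam, ∀ t < s,
      ((Finset.range s).filter (fun j => w k i j = t)).card = 1)
    (D2 : ℕ → ℕ → ℕ) (hLH : IsLH n p D2)
    (hD2 : ∀ r < n, ∀ k < p,
      D2 r k / s = s * v k (r / s ^ 2) + w k (r / s ^ 2) (r % s ^ 2 / s)) :
    IsOA n q s 2 D1 ∧ IsDCD n s q p D1 D2 := by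
  have hs0 : 0 < s := by omega
  have hs2 : 0 < s ^ 2 := by positivity
  subst hn
  have hdiv : ∀ b r : ℕ, r < s ^ 2 → (b * s ^ 2 + r) / s ^ 2 = b := by
    intro b r hr
    rw [mul_comm b (s ^ 2), Nat.mul_add_div hs2, Nat.div_eq_of_lt hr, add_zero]
  have hmod : ∀ b r : ℕ, r < s ^ 2 → (b * s ^ 2 + r) % s ^ 2 = r := by
    intro b r hr
    rw [mul_comm b (s ^ 2), Nat.mul_add_mod, Nat.mod_eq_of_lt hr]
  have hrowlt : ∀ b r : ℕ, b < lam → r < s ^ 2 → b * s ^ 2 + r < lam * s ^ 2 := by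
    intro b r hb hr
    calc b * s ^ 2 + r < b * s ^ 2 + s ^ 2 := by omega
      _ = (b + 1) * s ^ 2 := by ring
      _ ≤ lam * s ^ 2 := Nat.mul_le_mul_right _ (by omega)
  have hns2 : lam * s ^ 2 / s ^ 2 = lam := Nat.mul_div_cancel lam hs2
  have hns : lam * s ^ 2 / s = lam * s := by
    rw [pow_two, ← mul_assoc, Nat.mul_div_cancel _ hs0]
  have hOA : IsOA (lam * s ^ 2) q s 2 D1 := by
    constructor
    · intro r hr j hj
      rw [hD1 r hr j hj]
      exact (hAOA (r / s ^ 2) (Nat.div_lt_of_lt_mul (by rw [mul_comm]; exact hr))).1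
        (r % s ^ 2) (Nat.mod_lt _ hs2) j (Nat.lt_succ_of_lt hj)
    · intro f hf hinj vv hvv
      rw [count_split lam (s ^ 2), hns2]
      have key : ∀ b ∈ Finset.range lam,
          ((Finset.range (s ^ 2)).filter
            (fun r => ∀ i, D1 (b * s ^ 2 + r) (f i) = vv i)).card = 1 := by
        intro b hb
        rw [Finset.mem_range] at hb
        have heq : (Finset.range (s ^ 2)).filter
              (fun r => ∀ i, D1 (b * s ^ 2 + r) (f i) = vv i)
            = (Finset.range (s ^ 2)).filter (fun r => ∀ i, A b r (f i) = vv i) := by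
          apply Finset.filter_congr
          intro r hr
          rw [Finset.mem_range] at hr
          have hD : ∀ i, D1 (b * s ^ 2 + r) (f i) = A b r (f i) := by
            intro i
            rw [hD1 _ (hrowlt b r hb hr) _ (hf i), hdiv b r hr, hmod b r hr]
          exact forall_congr' fun i => by rw [hD i]
        rw [heq, (hAOA b hb).2 f (fun i => Nat.lt_succ_of_lt (hf i)) hinj vv hvv,
          Nat.div_self hs2]
      rw [Finset.sum_congr rfl key, Finset.sum_const, smul_eq_mul, mul_one,
        Finset.card_range]
  refine ⟨hOA, ?_, ?_⟩
  · -- condition (i)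
    intro i hi k hk a ha v0 hv0
    rw [hns] at hv0
    have hm : v0 / s < lam := Nat.div_lt_of_lt_mul (by rw [mul_comm]; exact hv0)
    have ht : v0 % s < s := Nat.mod_lt _ hs0
    have hwlt : ∀ blk, blk < lam → ∀ j, j < s → w k blk j < s := fun blk hblk =>
      perm_lt s (w k blk) (fun t' ht' => hw k hk blk hblk t' ht')
    rw [count_split lam (s ^ 2)]
    have key : ∀ b ∈ Finset.range lam,
        ((Finset.range (s ^ 2)).filter
          (fun r => D1 (b * s ^ 2 + r) i = a ∧ D2 (b * s ^ 2 + r) k / s = v0)).card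
          = if v k b = v0 / s then 1 else 0 := by
      intro b hb
      rw [Finset.mem_range] at hb
      obtain ⟨jstar, hjs, hwjs, huniq⟩ := unique_of_card_one (hw k hk b hb (v0 % s) ht)
      have heq : (Finset.range (s ^ 2)).filter
            (fun r => D1 (b * s ^ 2 + r) i = a ∧ D2 (b * s ^ 2 + r) k / s = v0)
          = (Finset.range (s ^ 2)).filter
            (fun r => (A b r i = a ∧ A b r q = jstar) ∧ v k b = v0 / s) := by
        apply Finset.filter_congr
        intro r hr
        rw [Finset.mem_range] at hr
        have hR := hrowlt b r hb hr
        have hd1 : D1 (b * s ^ 2 + r) i = A b r i := by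
          rw [hD1 _ hR _ hi, hdiv b r hr, hmod b r hr]
        have hd2 : D2 (b * s ^ 2 + r) k / s = s * v k b + w k b (r / s) := by
          rw [hD2 _ hR _ hk, hdiv b r hr, hmod b r hr]
        have hrs : r / s < s := Nat.div_lt_of_lt_mul (by rw [← pow_two]; exact hr)
        have hwr : w k b (r / s) < s := hwlt b hb _ hrs
        have hlast : A b r q = r / s := hAlast b hb r hr
        constructor
        · rintro ⟨h1, h2⟩
          rw [hd2] at h2
          have hV : v k b = v0 / s := by
            have : (s * v k b + w k b (r / s)) / s = v k b := by
              rw [Nat.mul_add_div hs0, Nat.div_eq_of_lt hwr, add_zero]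
            rw [h2] at this
            omega
          have hW : w k b (r / s) = v0 % s := by
            have : (s * v k b + w k b (r / s)) % s = w k b (r / s) := by
              rw [Nat.mul_add_mod, Nat.mod_eq_of_lt hwr]
            rw [h2] at this
            omega
          refine ⟨⟨by rw [← hd1]; exact h1, ?_⟩, hV⟩
          rw [hlast]
          exact huniq _ hrs hW
        · rintro ⟨⟨h1, h2⟩, h3⟩
          refine ⟨by rw [hd1]; exact h1, ?_⟩
          rw [hd2, h3]
          have hrj : r / s = jstar := by rw [← hlast]; exact h2
          rw [hrj, hwjs]
          exact Nat.div_add_mod v0 s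
      rw [heq]
      by_cases hc : v k b = v0 / s
      · rw [if_pos hc]
        have heq2 : (Finset.range (s ^ 2)).filter
              (fun r => (A b r i = a ∧ A b r q = jstar) ∧ v k b = v0 / s)
            = (Finset.range (s ^ 2)).filter (fun r => A b r i = a ∧ A b r q = jstar) :=
          Finset.filter_congr fun r _ => by simp [hc]
        rw [heq2]
        exact OA_pair (hAOA b hb) hs0 i q (Nat.lt_succ_of_lt hi) (Nat.lt_succ_self q)
          (by omega) a jstar ha hjs
      · rw [if_neg hc, Finset.filter_false_of_mem (fun r _ h => hc h.2),
          Finset.card_empty]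
    rw [Finset.sum_congr rfl key]
    have h1 := hv k hk (v0 / s) hm
    rw [Finset.card_filter] at h1
    exact h1
  · -- condition (ii)
    intro i hi j hj hij k hk a ha b' hb' v0 hv0
    rw [hns2] at hv0
    have hwlt : ∀ blk, blk < lam → ∀ jj, jj < s → w k blk jj < s := fun blk hblk =>
      perm_lt s (w k blk) (fun t' ht' => hw k hk blk hblk t' ht')
    rw [count_split lam (s ^ 2)]
    have key : ∀ b ∈ Finset.range lam,
        ((Finset.range (s ^ 2)).filter
          (fun r => D1 (b * s ^ 2 + r) i = a ∧ D1 (b * s ^ 2 + r) j = b' ∧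
            D2 (b * s ^ 2 + r) k / s ^ 2 = v0)).card
          = if v k b = v0 then 1 else 0 := by
      intro b hb
      rw [Finset.mem_range] at hb
      have heq : (Finset.range (s ^ 2)).filter
            (fun r => D1 (b * s ^ 2 + r) i = a ∧ D1 (b * s ^ 2 + r) j = b' ∧
              D2 (b * s ^ 2 + r) k / s ^ 2 = v0)
          = (Finset.range (s ^ 2)).filter
            (fun r => (A b r i = a ∧ A b r j = b') ∧ v k b = v0) := by
        apply Finset.filter_congr
        intro r hr
        rw [Finset.mem_range] at hr
        have hR := hrowlt b r hb hr
        have hd1 : D1 (b * s ^ 2 + r) i = A b r i := by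
          rw [hD1 _ hR _ hi, hdiv b r hr, hmod b r hr]
        have hd1' : D1 (b * s ^ 2 + r) j = A b r j := by
          rw [hD1 _ hR _ hj, hdiv b r hr, hmod b r hr]
        have hrs : r / s < s := Nat.div_lt_of_lt_mul (by rw [← pow_two]; exact hr)
        have hwr : w k b (r / s) < s := hwlt b hb _ hrs
        have hd2 : D2 (b * s ^ 2 + r) k / s ^ 2 = v k b := by
          have h' : D2 (b * s ^ 2 + r) k / s ^ 2 = D2 (b * s ^ 2 + r) k / s / s := by
            rw [Nat.div_div_eq_div_mul, ← pow_two]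
          rw [h', hD2 _ hR _ hk, hdiv b r hr, hmod b r hr, Nat.mul_add_div hs0,
            Nat.div_eq_of_lt hwr, add_zero]
        rw [hd1, hd1', hd2]
        tauto
      rw [heq]
      by_cases hc : v k b = v0
      · rw [if_pos hc]
        have heq2 : (Finset.range (s ^ 2)).filter
              (fun r => (A b r i = a ∧ A b r j = b') ∧ v k b = v0)
            = (Finset.range (s ^ 2)).filter (fun r => A b r i = a ∧ A b r j = b') :=
          Finset.filter_congr fun r _ => by simp [hc]
        rw [heq2]
        exact OA_pair (hAOA b hb) hs0 i j (Nat.lt_succ_of_lt hi) (Nat.lt_succ_of_lt hj)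
          hij a b' ha hb'
      · rw [if_neg hc, Finset.filter_false_of_mem (fun r _ h => hc h.2),
          Finset.card_empty]
    rw [Finset.sum_congr rfl key]
    have h1 := hv k hk v0 hv0
    rw [Finset.card_filter] at h1
    exact h1
end

section
/- (Construction 2.) Let s ≥ 2, λ ≥ 1, q ≥ 1, p ≥ 1 and n = λs². Let A_1 be an OA(s²,q+1,s,2) whose last column equals (0,…,0,1,…,1,…,s−1,…,s−1)^T, i.e., its entry in row (j−1)s+r equals j−1 for 1 ≤ j ≤ s, 1 ≤ r ≤ s. Let D1 be the n×q matrix obtained by stacking λ copies of A_1 vertically and deleting the last column. Let B = (b_1,…,b_p) be an n×p matrix with entries in {0,…,λ−1} such that for every 1 ≤ i ≤ s² and 1 ≤ k ≤ p, the λ entries b_{i,k}, b_{i+s²,k}, …, b_{i+(λ−1)s²,k} form a permutation of 0,1,…,λ−1. For 1 ≤ k ≤ p let w_k be a permutation of (0,1,…,s−1) and let c_k be the n-vector whose entry in row (l−1)s²+(j−1)s+r is w_k(j) for 1 ≤ l ≤ λ, 1 ≤ j ≤ s, 1 ≤ r ≤ s; set C = (c_1,…,c_p). Then for any LH(n,p)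 D2 with ⌊D2/s⌋ = sB + C, the pair (D1,D2) is a doubly coupled design DCD(λs², s^q, p). -/
lemma split_count (m L : ℕ) (P : ℕ → Prop) [DecidablePred P] :
    ((Finset.range (L * m)).filter P).card
      = ∑ i ∈ Finset.range m, ((Finset.range L).filter (fun l => P (i + l * m))).card := by
  rcases Nat.eq_zero_or_pos m with rfl | hm
  · simp
  rw [← Finset.card_sigma]
  apply Finset.card_nbij' (i := fun r => ⟨r % m, r / m⟩) (j := fun x => x.1 + x.2 * m)
  · intro r hr
    simp only [Finset.mem_coe, Finset.mem_filter, Finset.mem_range] at hr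
    simp only [Finset.mem_coe, Finset.mem_sigma, Finset.mem_filter, Finset.mem_range]
    refine ⟨Nat.mod_lt _ hm, Nat.div_lt_of_lt_mul ?_, ?_⟩
    · exact Nat.lt_of_lt_of_le hr.1 (Nat.le_of_eq (Nat.mul_comm L m))
    · rw [Nat.mod_add_div']; exact hr.2
  · intro x hx
    simp only [Finset.mem_coe, Finset.mem_sigma, Finset.mem_filter, Finset.mem_range] at hx
    simp only [Finset.mem_coe, Finset.mem_filter, Finset.mem_range]
    obtain ⟨hx1, hx2, hx3⟩ := hx
    refine ⟨?_, hx3⟩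
    calc x.1 + x.2 * m < m + x.2 * m := Nat.add_lt_add_right hx1 _
      _ = (x.2 + 1) * m := by ring
      _ ≤ L * m := Nat.mul_le_mul_right _ hx2
  · intro r _; exact Nat.mod_add_div' r m
  · intro x hx
    simp only [Finset.mem_coe, Finset.mem_sigma, Finset.mem_filter, Finset.mem_range] at hx
    obtain ⟨hx1, _, _⟩ := hx
    have h1 : (x.1 + x.2 * m) % m = x.1 := by
      rw [Nat.add_mul_mod_self_right, Nat.mod_eq_of_lt hx1]
    have h2 : (x.1 + x.2 * m) / m = x.2 := by
      rw [Nat.add_mul_div_right _ _ hm, Nat.div_eq_of_lt hx1, Nat.zero_add]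
    cases x with
    | mk a b => simp_all

lemma mul_add_eq_iff' {s B c v : ℕ} (hs : 0 < s) (hc : c < s) :
    s * B + c = v ↔ (B = v / s ∧ c = v % s) := by
  constructor
  · rintro rfl
    rw [Nat.mul_add_div hs, Nat.div_eq_of_lt hc, Nat.mul_add_mod, Nat.mod_eq_of_lt hc]
    simp
  · rintro ⟨rfl, rfl⟩; rw [Nat.div_add_mod]

lemma perm_lt_s6 {s : ℕ} {w : ℕ → ℕ}
    (hw : ∀ t < s, ((Finset.range s).filter (fun j => w j = t)).card = 1) :
    ∀ j < s, w j < s := by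
  intro j hj
  have hU : (Finset.range s).biUnion
      (fun t => (Finset.range s).filter (fun j => w j = t)) = Finset.range s := by
    apply Finset.eq_of_subset_of_card_le
    · intro x hx
      simp only [Finset.mem_biUnion, Finset.mem_filter] at hx
      obtain ⟨t, _, hx, _⟩ := hx
      exact hx
    · rw [Finset.card_biUnion]
      · rw [Finset.card_range]
        calc s = ∑ _t ∈ Finset.range s, 1 := by simp
          _ ≤ _ := Finset.sum_le_sum (fun t ht => by
              rw [hw t (Finset.mem_range.1 ht)])
      · intro t ht t' ht' hne
        simp only [Finset.disjoint_left, Finset.mem_filter]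
        rintro x ⟨_, rfl⟩ ⟨_, h⟩
        exact hne h
  have : j ∈ (Finset.range s).biUnion
      (fun t => (Finset.range s).filter (fun j => w j = t)) := by
    rw [hU]; exact Finset.mem_range.2 hj
  simp only [Finset.mem_biUnion, Finset.mem_filter, Finset.mem_range] at this
  obtain ⟨t, ht, _, rfl⟩ := this
  exact ht

/-- Construction 2 (Proposition 2): stacking `λ` copies of one OA(s²,q+1,s,2) (with
structured last column) and defining `⌊D2/s⌋ = sB + C`, where each column of `B` is a
permutation of `{0,…,λ-1}` along each residue class of rows mod `s²` and `C` comes from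
a single level permutation per column, yields a DCD(λs²,s^q,p). -/
theorem statement6 (s lam q p n : ℕ) (hs : 2 ≤ s) (hlam : 1 ≤ lam) (hq : 1 ≤ q)
    (hp : 1 ≤ p) (hn : n = lam * s ^ 2)
    (A1 : ℕ → ℕ → ℕ) (hA1 : IsOA (s ^ 2) (q + 1) s 2 A1)
    (hAlast : ∀ r < s ^ 2, A1 r q = r / s)
    (D1 : ℕ → ℕ → ℕ)
    (hD1 : ∀ r < n, ∀ c < q, D1 r c = A1 (r % s ^ 2) c)
    (B : ℕ → ℕ → ℕ)
    (hBent : ∀ r < n, ∀ k < p, B r k < lam)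
    (hB : ∀ i < s ^ 2, ∀ k < p, ∀ t < lam,
      ((Finset.range lam).filter (fun l => B (i + l * s ^ 2) k = t)).card = 1)
    (w : ℕ → ℕ → ℕ)
    (hw : ∀ k < p, ∀ t < s,
      ((Finset.range s).filter (fun j => w k j = t)).card = 1)
    (D2 : ℕ → ℕ → ℕ) (hLH : IsLH n p D2)
    (hD2 : ∀ r < n, ∀ k < p, D2 r k / s = s * B r k + w k (r % s ^ 2 / s)) :
    IsOA n q s 2 D1 ∧ IsDCD n s q p D1 D2 := by
  subst hn
  obtain ⟨hAent, hAcnt⟩ := hA1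
  have hs0 : 0 < s := by omega
  have hs2 : 0 < s ^ 2 := pow_pos hs0 2
  have hOA2 : ∀ c1 < q + 1, ∀ c2 < q + 1, c1 ≠ c2 → ∀ a < s, ∀ b < s,
      ((Finset.range (s ^ 2)).filter (fun r => A1 r c1 = a ∧ A1 r c2 = b)).card = 1 := by
    intro c1 h1 c2 h2 hne a ha b hb
    have key := hAcnt ![c1, c2] (by intro i; fin_cases i <;> simp <;> omega)
      (by intro x y hxy; fin_cases x <;> fin_cases y <;> simp_all)
      ![a, b] (by intro i; fin_cases i <;> simpa)
    rw [Nat.div_self hs2] at key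
    rw [← key]
    refine congrArg Finset.card (Finset.filter_congr ?_)
    intro r hr
    simp [Fin.forall_fin_two]
  have hrowlt : ∀ i0 < s ^ 2, ∀ l < lam, i0 + l * s ^ 2 < lam * s ^ 2 := by
    intro i0 hi0 l hl
    calc i0 + l * s ^ 2 < s ^ 2 + l * s ^ 2 := Nat.add_lt_add_right hi0 _
      _ = (l + 1) * s ^ 2 := by ring
      _ ≤ lam * s ^ 2 := Nat.mul_le_mul_right _ hl
  have hrowmod : ∀ i0 < s ^ 2, ∀ l : ℕ, (i0 + l * s ^ 2) % s ^ 2 = i0 := by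
    intro i0 hi0 l
    rw [Nat.add_mul_mod_self_right, Nat.mod_eq_of_lt hi0]
  refine ⟨⟨?_, ?_⟩, ?_, ?_⟩
  · -- entries of D1
    intro r hr jj hjj
    rw [hD1 r hr jj hjj]
    exact hAent _ (Nat.mod_lt _ hs2) _ (by omega)
  · -- OA counting for D1
    intro f hf hinj v hv
    rw [split_count (s ^ 2) lam, Nat.mul_div_cancel _ hs2]
    have hstep : ∀ i0 ∈ Finset.range (s ^ 2),
        ((Finset.range lam).filter
          (fun l => ∀ t, D1 (i0 + l * s ^ 2) (f t) = v t)).card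
          = if (∀ t, A1 i0 (f t) = v t) then lam else 0 := by
      intro i0 hi0m
      have hi0 := Finset.mem_range.1 hi0m
      have hPiff : ∀ l < lam,
          ((∀ t, D1 (i0 + l * s ^ 2) (f t) = v t) ↔ (∀ t, A1 i0 (f t) = v t)) := by
        intro l hl
        have heq : ∀ t, D1 (i0 + l * s ^ 2) (f t) = A1 i0 (f t) := fun t => by
          rw [hD1 _ (hrowlt i0 hi0 l hl) _ (hf t), hrowmod i0 hi0 l]
        exact ⟨fun h t => (heq t) ▸ h t, fun h t => (heq t).trans (h t)⟩
      by_cases hQ : ∀ t, A1 i0 (f t) = v t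
      · rw [if_pos hQ, Finset.filter_true_of_mem
          (fun l hl => (hPiff l (Finset.mem_range.1 hl)).2 hQ), Finset.card_range]
      · rw [if_neg hQ, Finset.filter_false_of_mem
          (fun l hl h => hQ ((hPiff l (Finset.mem_range.1 hl)).1 h)), Finset.card_empty]
    rw [Finset.sum_congr rfl hstep, ← Finset.sum_filter, Finset.sum_const, smul_eq_mul]
    have hc := hAcnt f (fun i => Nat.lt_succ_of_lt (hf i)) hinj v hv
    rw [Nat.div_self hs2] at hc
    rw [hc, one_mul]
  · -- DCD condition (i)
    intro i hi k hk a ha v hv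
    have hvs : v < lam * s := by
      have h : lam * s ^ 2 / s = lam * s := by
        rw [pow_two, ← Nat.mul_assoc, Nat.mul_div_cancel _ hs0]
      rwa [h] at hv
    have hwlt : ∀ j < s, w k j < s := perm_lt_s6 (fun t ht => hw k hk t ht)
    obtain ⟨j0, hj0⟩ := Finset.card_eq_one.1 (hw k hk (v % s) (Nat.mod_lt _ hs0))
    have hj0mem : j0 ∈ (Finset.range s).filter (fun j => w k j = v % s) := by
      rw [hj0]; exact Finset.mem_singleton_self _
    have hj0lt : j0 < s := Finset.mem_range.1 (Finset.mem_filter.1 hj0mem).1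
    have hj0w : w k j0 = v % s := (Finset.mem_filter.1 hj0mem).2
    have hweq : ∀ j < s, (w k j = v % s ↔ j = j0) := by
      intro j hjlt
      constructor
      · intro h
        have hm : j ∈ (Finset.range s).filter (fun j => w k j = v % s) :=
          Finset.mem_filter.2 ⟨Finset.mem_range.2 hjlt, h⟩
        rw [hj0] at hm; exact Finset.mem_singleton.1 hm
      · rintro rfl; exact hj0w
    have hvd : v / s < lam := Nat.div_lt_of_lt_mul (Nat.mul_comm lam s ▸ hvs)
    rw [split_count (s ^ 2) lam]
    have hstep : ∀ i0 ∈ Finset.range (s ^ 2),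
        ((Finset.range lam).filter
          (fun l => D1 (i0 + l * s ^ 2) i = a ∧ D2 (i0 + l * s ^ 2) k / s = v)).card
          = if (A1 i0 i = a ∧ A1 i0 q = j0) then 1 else 0 := by
      intro i0 hi0m
      have hi0 := Finset.mem_range.1 hi0m
      have hi0s : i0 / s < s := Nat.div_lt_of_lt_mul (by rwa [← pow_two])
      have hAl : A1 i0 q = i0 / s := hAlast i0 hi0
      have hPiff : ∀ l < lam,
          ((D1 (i0 + l * s ^ 2) i = a ∧ D2 (i0 + l * s ^ 2) k / s = v)
            ↔ ((A1 i0 i = a ∧ A1 i0 q = j0) ∧ B (i0 + l * s ^ 2) k = v / s)) := by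
        intro l hl
        rw [hD1 _ (hrowlt i0 hi0 l hl) _ hi, hD2 _ (hrowlt i0 hi0 l hl) _ hk,
          hrowmod i0 hi0 l, mul_add_eq_iff' hs0 (hwlt _ hi0s), hweq _ hi0s, hAl]
        tauto
      by_cases hQ : A1 i0 i = a ∧ A1 i0 q = j0
      · rw [if_pos hQ]
        have hfe : (Finset.range lam).filter
            (fun l => D1 (i0 + l * s ^ 2) i = a ∧ D2 (i0 + l * s ^ 2) k / s = v)
            = (Finset.range lam).filter (fun l => B (i0 + l * s ^ 2) k = v / s) :=
          Finset.filter_congr (fun l hl => by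
            rw [hPiff l (Finset.mem_range.1 hl)]; simp [hQ])
        rw [hfe]
        exact hB i0 hi0 k hk (v / s) hvd
      · rw [if_neg hQ, Finset.filter_false_of_mem
          (fun l hl h => hQ ((hPiff l (Finset.mem_range.1 hl)).1 h).1), Finset.card_empty]
    rw [Finset.sum_congr rfl hstep, ← Finset.sum_filter, Finset.sum_const, smul_eq_mul,
      mul_one]
    exact hOA2 i (Nat.lt_succ_of_lt hi) q (Nat.lt_succ_self q) (Nat.ne_of_lt hi) a ha j0 hj0lt
  · -- DCD condition (ii)
    intro i hi j hj hij k hk a ha b hb v hv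
    have hvlam : v < lam := by rwa [Nat.mul_div_cancel _ hs2] at hv
    have hwlt : ∀ j' < s, w k j' < s := perm_lt_s6 (fun t ht => hw k hk t ht)
    rw [split_count (s ^ 2) lam]
    have hstep : ∀ i0 ∈ Finset.range (s ^ 2),
        ((Finset.range lam).filter
          (fun l => D1 (i0 + l * s ^ 2) i = a ∧ D1 (i0 + l * s ^ 2) j = b ∧
            D2 (i0 + l * s ^ 2) k / s ^ 2 = v)).card
          = if (A1 i0 i = a ∧ A1 i0 j = b) then 1 else 0 := by
      intro i0 hi0m
      have hi0 := Finset.mem_range.1 hi0m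
      have hi0s : i0 / s < s := Nat.div_lt_of_lt_mul (by rwa [← pow_two])
      have hPiff : ∀ l < lam,
          ((D1 (i0 + l * s ^ 2) i = a ∧ D1 (i0 + l * s ^ 2) j = b ∧
              D2 (i0 + l * s ^ 2) k / s ^ 2 = v)
            ↔ ((A1 i0 i = a ∧ A1 i0 j = b) ∧ B (i0 + l * s ^ 2) k = v)) := by
        intro l hl
        have hdd : D2 (i0 + l * s ^ 2) k / s ^ 2 = B (i0 + l * s ^ 2) k := by
          calc D2 (i0 + l * s ^ 2) k / s ^ 2
              = D2 (i0 + l * s ^ 2) k / s / s := by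
                rw [Nat.div_div_eq_div_mul, ← pow_two]
            _ = (s * B (i0 + l * s ^ 2) k + w k (i0 / s)) / s := by
                rw [hD2 _ (hrowlt i0 hi0 l hl) _ hk, hrowmod i0 hi0 l]
            _ = B (i0 + l * s ^ 2) k := by
                rw [Nat.mul_add_div hs0, Nat.div_eq_of_lt (hwlt _ hi0s), Nat.add_zero]
        rw [hD1 _ (hrowlt i0 hi0 l hl) _ hi, hD1 _ (hrowlt i0 hi0 l hl) _ hj,
          hrowmod i0 hi0 l, hdd]
        tauto
      by_cases hQ : A1 i0 i = a ∧ A1 i0 j = b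
      · rw [if_pos hQ]
        have hfe : (Finset.range lam).filter
            (fun l => D1 (i0 + l * s ^ 2) i = a ∧ D1 (i0 + l * s ^ 2) j = b ∧
              D2 (i0 + l * s ^ 2) k / s ^ 2 = v)
            = (Finset.range lam).filter (fun l => B (i0 + l * s ^ 2) k = v) :=
          Finset.filter_congr (fun l hl => by
            rw [hPiff l (Finset.mem_range.1 hl)]; simp [hQ])
        rw [hfe]
        exact hB i0 hi0 k hk v hvlam
      · rw [if_neg hQ, Finset.filter_false_of_mem
          (fun l hl h => hQ ((hPiff l (Finset.mem_range.1 hl)).1 h).1), Finset.card_empty]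
    rw [Finset.sum_congr rfl hstep, ← Finset.sum_filter, Finset.sum_const, smul_eq_mul,
      mul_one]
    exact hOA2 i (Nat.lt_succ_of_lt hi) j (Nat.lt_succ_of_lt hj) hij a ha b hb
end

section
/- (Construction 3.) Let s, n, q, p be positive integers with s ≥ 2 and s² dividing n. Let A = (a_1,…,a_{q+1}) be an OA(n,q+1,s,2) and let B = (b_1,…,b_p) be an n×p matrix in which each column takes each value in {0,…,n/s²−1} exactly s² times (an OA(n,p,n/s²,1)). Suppose that for all 1 ≤ i ≠ j ≤ q+1 and 1 ≤ k ≤ p, every triple in {0,…,s−1}×{0,…,s−1}×{0,…,n/s²−1} occurs exactly once among the n rows of (a_i, a_j, b_k). Let D1 consist of q of the columns of A and let a* denote the remaining column; for 1 ≤ k ≤ p let c_k = π_k ∘ a* where π_k is a permutation of {0,…,s−1}, and set C = (c_1,…,c_p). Then for any LH(n,p) D2 with ⌊D2/s⌋ = sB + C, the pair (D1,D2) is a doubly coupled design DCD(n,s^q,p). -/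
/-- Construction 3 (Theorem 4): given `A` an OA(n,q+1,s,2) and `B` an OA(n,p,n/s²,1)
with every triple `(a_i, a_j, b_k)` a full factorial, deleting column `e` of `A` to get
`D1`, taking `C` by level-permuting the removed column `a*`, and choosing `D2` with
`⌊D2/s⌋ = sB + C` produces a DCD(n,s^q,p). -/
theorem statement7 (s n q p : ℕ) (hs : 2 ≤ s) (hn : 0 < n) (hq : 1 ≤ q) (hp : 1 ≤ p)
    (hdvd : s ^ 2 ∣ n)
    (A : ℕ → ℕ → ℕ) (hA : IsOA n (q + 1) s 2 A)
    (B : ℕ → ℕ → ℕ)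
    (hBent : ∀ r < n, ∀ k < p, B r k < n / s ^ 2)
    (hB : ∀ k < p, ∀ v < n / s ^ 2,
      ((Finset.range n).filter (fun r => B r k = v)).card = s ^ 2)
    (htriple : ∀ i < q + 1, ∀ j < q + 1, i ≠ j → ∀ k < p, ∀ a < s, ∀ b < s,
      ∀ v < n / s ^ 2,
      ((Finset.range n).filter
        (fun r => A r i = a ∧ A r j = b ∧ B r k = v)).card = 1)
    (e : ℕ) (he : e < q + 1)
    (D1 : ℕ → ℕ → ℕ)
    (hD1 : ∀ r < n, ∀ c < q, D1 r c = A r (if c < e then c else c + 1))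
    (pi : ℕ → ℕ → ℕ)
    (hpi : ∀ k < p, ∀ t < s,
      ((Finset.range s).filter (fun a => pi k a = t)).card = 1)
    (D2 : ℕ → ℕ → ℕ) (hLH : IsLH n p D2)
    (hD2 : ∀ r < n, ∀ k < p, D2 r k / s = s * B r k + pi k (A r e)) :
    IsOA n q s 2 D1 ∧ IsDCD n s q p D1 D2 := by
  have hs0 : 0 < s := by omega
  set g : ℕ → ℕ := fun c => if c < e then c else c + 1 with hg
  have hglt : ∀ c < q, g c < q + 1 := by
    intro c hc; simp only [hg]; split_ifs <;> omega
  have hgne : ∀ c, g c ≠ e := by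
    intro c; simp only [hg]; split_ifs <;> omega
  have hginj : Function.Injective g := by
    intro c1 c2 h; simp only [hg] at h; split_ifs at h <;> omega
  -- pi maps {0,…,s-1} into itself
  have hpilt : ∀ k < p, ∀ a < s, pi k a < s := by
    intro k hk a ha
    have hT : (Finset.range s).filter (fun a => pi k a < s)
        = (Finset.range s).biUnion
            (fun t => (Finset.range s).filter (fun a => pi k a = t)) := by
      ext x
      simp only [Finset.mem_filter, Finset.mem_biUnion, Finset.mem_range]
      constructor
      · rintro ⟨hx, hlt⟩; exact ⟨pi k x, hlt, hx, rfl⟩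
      · rintro ⟨t, ht, hx, hxt⟩; exact ⟨hx, hxt ▸ ht⟩
    have hcard : ((Finset.range s).filter (fun a => pi k a < s)).card = s := by
      rw [hT, Finset.card_biUnion]
      · rw [Finset.sum_congr rfl (fun t ht => hpi k hk t (Finset.mem_range.mp ht))]
        simp
      · intro t1 _ t2 _ hne
        simp only [Finset.disjoint_left, Finset.mem_filter]
        rintro x ⟨_, h1⟩ ⟨_, h2⟩
        omega
    have heqs : (Finset.range s).filter (fun a => pi k a < s) = Finset.range s :=
      Finset.eq_of_subset_of_card_le (Finset.filter_subset _ _)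
        (by rw [hcard, Finset.card_range])
    have : a ∈ (Finset.range s).filter (fun a => pi k a < s) := by
      rw [heqs]; exact Finset.mem_range.mpr ha
    exact (Finset.mem_filter.mp this).2
  obtain ⟨m, hm⟩ := hdvd
  have hns2 : n / s ^ 2 = m := by
    rw [hm, Nat.mul_div_cancel_left _ (by positivity)]
  have hns : n / s = s * m := by
    rw [hm, pow_two, mul_assoc, Nat.mul_div_cancel_left _ hs0]
  have hOA : IsOA n q s 2 D1 := by
    constructor
    · intro r hr j hj
      rw [hD1 r hr j hj]
      exact hA.1 r hr _ (hglt j hj)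
    · intro f hf hfinj v hv
      have hcnt := hA.2 (fun i => g (f i)) (fun i => hglt _ (hf i))
        (fun i j h => hfinj (hginj h)) v hv
      rw [← hcnt]
      apply congrArg
      apply Finset.filter_congr
      intro r hr
      simp only [Finset.mem_range] at hr
      constructor
      · intro h i; rw [← hD1 r hr (f i) (hf i)]; exact h i
      · intro h i; rw [hD1 r hr (f i) (hf i)]; exact h i
  refine ⟨hOA, ?_, ?_⟩
  · -- condition (i)
    intro i hi k hk a ha v hv
    obtain ⟨b, hbset⟩ := Finset.card_eq_one.mp (hpi k hk (v % s) (Nat.mod_lt v hs0))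
    have hbmem : b ∈ (Finset.range s).filter (fun a => pi k a = v % s) := by
      rw [hbset]; exact Finset.mem_singleton_self b
    have hb : b < s := Finset.mem_range.mp (Finset.mem_filter.mp hbmem).1
    have hpib : pi k b = v % s := (Finset.mem_filter.mp hbmem).2
    have hbuniq : ∀ x < s, pi k x = v % s → x = b := by
      intro x hx hpx
      have : x ∈ (Finset.range s).filter (fun a => pi k a = v % s) :=
        Finset.mem_filter.mpr ⟨Finset.mem_range.mpr hx, hpx⟩
      rw [hbset] at this
      exact Finset.mem_singleton.mp this
    have hvs2 : v / s < n / s ^ 2 := by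
      rw [hns2]
      rw [hns] at hv
      exact Nat.div_lt_of_lt_mul (by omega)
    rw [← htriple (g i) (hglt i hi) e he (hgne i) k hk a ha b hb (v / s) hvs2]
    apply congrArg
    apply Finset.filter_congr
    intro r hr
    simp only [Finset.mem_range] at hr
    have hAe : A r e < s := hA.1 r hr e he
    have hπ : pi k (A r e) < s := hpilt k hk _ hAe
    rw [hD1 r hr i hi, hD2 r hr k hk]
    constructor
    · rintro ⟨h1, h2⟩
      have hmod : v % s = pi k (A r e) := by
        rw [← h2, Nat.mul_add_mod, Nat.mod_eq_of_lt hπ]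
      have hdiv : v / s = B r k := by
        rw [← h2, Nat.mul_add_div hs0, Nat.div_eq_of_lt hπ, add_zero]
      exact ⟨h1, hbuniq _ hAe hmod.symm, hdiv.symm⟩
    · rintro ⟨h1, h2, h3⟩
      refine ⟨h1, ?_⟩
      rw [h2, hpib, h3]
      exact Nat.div_add_mod v s
  · -- condition (ii)
    intro i hi j hj hij k hk a ha b hb v hv
    rw [← htriple (g i) (hglt i hi) (g j) (hglt j hj)
      (fun h => hij (hginj h)) k hk a ha b hb v hv]
    apply congrArg
    apply Finset.filter_congr
    intro r hr
    simp only [Finset.mem_range] at hr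
    have hAe : A r e < s := hA.1 r hr e he
    have hπ : pi k (A r e) < s := hpilt k hk _ hAe
    have hdd : D2 r k / s ^ 2 = B r k := by
      rw [pow_two, ← Nat.div_div_eq_div_mul, hD2 r hr k hk,
        Nat.mul_add_div hs0, Nat.div_eq_of_lt hπ, add_zero]
    rw [hD1 r hr i hi, hD1 r hr j hj, hdd]
end

section
/- Let s ≥ 2 and let G be an OA(s³,m,s,3). Split the columns of G into two disjoint groups: A with q+1 columns and B = (b_1,…,b_p) with p columns, where m = p+q+1. Let a* denote one column of A; for 1 ≤ k ≤ p let c_k = π_k ∘ a* where π_k is a permutation of {0,…,s−1}, set C = (c_1,…,c_p), and let D2 = (d_1,…,d_p) be any LH(s³,p) with ⌊D2/s⌋ = sB + C. Then for any 1 ≤ k ≠ k′ ≤ p, the projections of D2 onto columns k and k′ achieve stratification on s²×s and s×s² grids: every pair in {0,…,s²−1}×{0,…,s−1} occurs exactly once among the s³ rows of (⌊d_k/s⌋, ⌊d_{k′}/s²⌋), and every pair in {0,…,s−1}×{0,…,s²−1} occurs exactly once among the s³ rows of (⌊d_k/s²⌋, ⌊d_{k′}/s⌋). -/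
/-- Proposition 3(b): with `G` an OA(s³,m,s,3) split into `A` and `B`, `C` obtained by
level-permuting one column `a* = colA e` of `A`, and `D2` an LH(s³,p) with
`⌊D2/s⌋ = sB + C`, any two distinct columns of `D2` achieve stratification on
`s² × s` and `s × s²` grids. -/
theorem statement9 (s m q p : ℕ) (hs : 2 ≤ s) (hq : 1 ≤ q) (hp : 1 ≤ p)
    (hm : m = p + q + 1)
    (G : ℕ → ℕ → ℕ) (hG : IsOA (s ^ 3) m s 3 G)
    (colA colB : ℕ → ℕ)
    (hcolA : ∀ c < q + 1, colA c < m) (hcolB : ∀ k < p, colB k < m)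
    (hinjA : ∀ c < q + 1, ∀ c' < q + 1, colA c = colA c' → c = c')
    (hinjB : ∀ k < p, ∀ k' < p, colB k = colB k' → k = k')
    (hdisj : ∀ c < q + 1, ∀ k < p, colA c ≠ colB k)
    (e : ℕ) (he : e < q + 1)
    (pi : ℕ → ℕ → ℕ)
    (hpi : ∀ k < p, ∀ t < s,
      ((Finset.range s).filter (fun a => pi k a = t)).card = 1)
    (D2 : ℕ → ℕ → ℕ) (hLH : IsLH (s ^ 3) p D2)
    (hD2 : ∀ r < s ^ 3, ∀ k < p,
      D2 r k / s = s * G r (colB k) + pi k (G r (colA e))) :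
    ∀ k < p, ∀ k' < p, k ≠ k' →
      (∀ a < s ^ 2, ∀ b < s,
        ((Finset.range (s ^ 3)).filter
          (fun r => D2 r k / s = a ∧ D2 r k' / s ^ 2 = b)).card = 1) ∧
      (∀ a < s, ∀ b < s ^ 2,
        ((Finset.range (s ^ 3)).filter
          (fun r => D2 r k / s ^ 2 = a ∧ D2 r k' / s = b)).card = 1) := by
  have hs0 : 0 < s := by omega
  have hs3 : 0 < s ^ 3 := pow_pos hs0 3
  have hGlt := hG.1
  -- unique preimage under each permutation
  have hw : ∀ k < p, ∀ t < s, ∃ w, w < s ∧ pi k w = t ∧ ∀ a < s, pi k a = t → a = w := by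
    intro k hk t ht
    obtain ⟨w, hwe⟩ := Finset.card_eq_one.mp (hpi k hk t ht)
    have hwmem : w ∈ (Finset.range s).filter (fun a => pi k a = t) := by
      rw [hwe]; exact Finset.mem_singleton_self w
    simp only [Finset.mem_filter, Finset.mem_range] at hwmem
    refine ⟨w, hwmem.1, hwmem.2, ?_⟩
    intro a ha hat
    have : a ∈ (Finset.range s).filter (fun a => pi k a = t) := by
      simp [ha, hat]
    rw [hwe] at this; simpa using this
  -- each permutation maps {0..s-1} into {0..s-1}
  have hpilt : ∀ k < p, ∀ a < s, pi k a < s := by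
    intro k hk a ha
    have hU : (Finset.range s).filter (fun a => pi k a < s)
        = (Finset.range s).biUnion (fun t => (Finset.range s).filter (fun a => pi k a = t)) := by
      ext x
      simp only [Finset.mem_filter, Finset.mem_biUnion, Finset.mem_range]
      constructor
      · rintro ⟨hx, hlt⟩; exact ⟨pi k x, hlt, hx, rfl⟩
      · rintro ⟨t, ht, hx, hxe⟩; exact ⟨hx, hxe ▸ ht⟩
    have hcard : ((Finset.range s).filter (fun a => pi k a < s)).card = s := by
      rw [hU, Finset.card_biUnion]
      · rw [Finset.sum_congr rfl (fun t ht => hpi k hk t (Finset.mem_range.mp ht))]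
        simp
      · intro t _ t' _ htt'
        rw [Function.onFun, Finset.disjoint_left]
        intro x hx hx'
        simp only [Finset.mem_filter] at hx hx'
        exact htt' (hx.2 ▸ hx'.2)
    have heq : (Finset.range s).filter (fun a => pi k a < s) = Finset.range s :=
      Finset.eq_of_subset_of_card_le (Finset.filter_subset _ _)
        (by rw [hcard, Finset.card_range])
    have hmem : a ∈ (Finset.range s).filter (fun a => pi k a < s) := by
      rw [heq]; exact Finset.mem_range.mpr ha
    exact (Finset.mem_filter.mp hmem).2
  have key : ∀ k < p, ∀ k' < p, k ≠ k' → ∀ a < s ^ 2, ∀ b < s,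
      ((Finset.range (s ^ 3)).filter
        (fun r => D2 r k / s = a ∧ D2 r k' / s ^ 2 = b)).card = 1 := by
    intro k hk k' hk' hkk' a ha b hb
    obtain ⟨w, hw1, hw2, hw3⟩ := hw k hk (a % s) (Nat.mod_lt a hs0)
    have has : a / s < s := by
      apply Nat.div_lt_of_lt_mul
      rw [← pow_two]; exact ha
    have hne1 : colA e ≠ colB k := hdisj e he k hk
    have hne2 : colA e ≠ colB k' := hdisj e he k' hk'
    have hne3 : colB k ≠ colB k' := fun h => hkk' (hinjB k hk k' hk' h)
    have hfm : ∀ i : Fin 3, (![colB k, colA e, colB k'] : Fin 3 → ℕ) i < m := by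
      intro i
      fin_cases i
      · exact hcolB k hk
      · exact hcolA e he
      · exact hcolB k' hk'
    have hfinj : Function.Injective (![colB k, colA e, colB k'] : Fin 3 → ℕ) := by
      intro i j hij
      fin_cases i <;> fin_cases j <;>
        simp only [Matrix.cons_val_zero, Matrix.cons_val_one, Matrix.head_cons,
          Matrix.cons_val_two, Matrix.tail_cons] at hij <;>
        first
          | rfl
          | exact absurd hij hne1
          | exact absurd hij.symm hne1
          | exact absurd hij hne2
          | exact absurd hij.symm hne2
          | exact absurd hij hne3
          | exact absurd hij.symm hne3
    have hvlt : ∀ i : Fin 3, (![a / s, w, b] : Fin 3 → ℕ) i < s := by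
      intro i
      fin_cases i
      · exact has
      · exact hw1
      · exact hb
    have hcount := hG.2 (![colB k, colA e, colB k']) hfm hfinj (![a / s, w, b]) hvlt
    have hfe : (Finset.range (s ^ 3)).filter
          (fun r => D2 r k / s = a ∧ D2 r k' / s ^ 2 = b)
        = (Finset.range (s ^ 3)).filter
          (fun r => ∀ i, G r ((![colB k, colA e, colB k'] : Fin 3 → ℕ) i)
            = (![a / s, w, b] : Fin 3 → ℕ) i) := by
      apply Finset.filter_congr
      intro r hr
      rw [Finset.mem_range] at hr
      have hga : G r (colA e) < s := hGlt r hr _ (hcolA e he)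
      have hpk : pi k (G r (colA e)) < s := hpilt k hk _ hga
      have hpk' : pi k' (G r (colA e)) < s := hpilt k' hk' _ hga
      have hd1 : D2 r k / s = s * G r (colB k) + pi k (G r (colA e)) := hD2 r hr k hk
      have hd2 : D2 r k' / s ^ 2 = G r (colB k') := by
        have h21 : D2 r k' / s ^ 2 = D2 r k' / s / s := by
          rw [Nat.div_div_eq_div_mul, pow_two]
        rw [h21, hD2 r hr k' hk', Nat.mul_add_div hs0, Nat.div_eq_of_lt hpk', Nat.add_zero]
      have h3iff : (∀ i, G r ((![colB k, colA e, colB k'] : Fin 3 → ℕ) i)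
            = (![a / s, w, b] : Fin 3 → ℕ) i)
          ↔ (G r (colB k) = a / s ∧ G r (colA e) = w ∧ G r (colB k') = b) := by
        constructor
        · intro h
          exact ⟨h 0, h 1, h 2⟩
        · rintro ⟨h1, h2, h3⟩ i
          fin_cases i <;>
            simp only [Matrix.cons_val_zero, Matrix.cons_val_one, Matrix.head_cons,
              Matrix.cons_val_two, Matrix.tail_cons] <;>
            assumption
      simp only [h3iff]
      constructor
      · rintro ⟨h1, h2⟩
        have hdiv : G r (colB k) = a / s := by
          rw [← h1, hd1, Nat.mul_add_div hs0, Nat.div_eq_of_lt hpk, Nat.add_zero]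
        have hmod : pi k (G r (colA e)) = a % s := by
          rw [← h1, hd1, Nat.mul_add_mod, Nat.mod_eq_of_lt hpk]
        exact ⟨hdiv, hw3 _ hga hmod, by rw [← hd2, h2]⟩
      · rintro ⟨h1, h2, h3⟩
        constructor
        · rw [hd1, h1, h2, hw2, Nat.div_add_mod]
        · rw [hd2, h3]
    rw [hfe, hcount, Nat.div_self hs3]
  intro k hk k' hk' hkk'
  refine ⟨fun a ha b hb => key k hk k' hk' hkk' a ha b hb, fun a ha b hb => ?_⟩
  rw [← key k' hk' k hk (Ne.symm hkk') b hb a ha]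
  refine congrArg Finset.card ?_
  apply Finset.filter_congr
  intro r _
  exact and_comm
end

section
/- (Lemma 1(b).) Let F be a finite field with s elements, u ≥ 3 an integer, and for 1 ≤ i ≤ u let ξ_i : F^u → F be the i-th coordinate projection. For 1 ≤ v ≤ u−2 let R_v be the family of s² functions {ξ_1 + μξ_2 + νξ_{v+2} : μ ∈ F, ν ∈ F∖{0}} ∪ {ξ_2 + νξ_{v+2} : ν ∈ F∖{0}} ∪ {ξ_{v+2}}. Then each R_v consists of s² pairwise distinct functions, the functions in R_v and R_{v′} are distinct for v ≠ v′, and for any two distinct functions g, g′ ∈ R_1 ∪ ⋯ ∪ R_{u−2} and any (a,b) ∈ F×F, the number of points x ∈ F^u with (g(x), g′(x)) = (a,b) is exactly s^{u−2}; that is, the combined array (R_1,…,R_{u−2}) is an OA(s^u, (u−2)s², s, 2). -/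
open Finset

theorem oa_count_lemma {F : Type} [Field F] [Fintype F] [DecidableEq F]
    {s u : ℕ} (hcard : Fintype.card F = s) (hu : 3 ≤ u)
    (w w' : Fin u) (hw : 2 ≤ (w : ℕ)) (hw' : 2 ≤ (w' : ℕ))
    (α β γ α' β' γ' : F) (hγ : γ ≠ 0) (hγ' : γ' ≠ 0)
    (hind : w ≠ w' ∨ (w = w' ∧ (α * γ' ≠ α' * γ ∨ β * γ' ≠ β' * γ)))
    (g g' : (Fin u → F) → F)
    (hg : ∀ x, g x = α * x ⟨0, by omega⟩ + β * x ⟨1, by omega⟩ + γ * x w)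
    (hg' : ∀ x, g' x = α' * x ⟨0, by omega⟩ + β' * x ⟨1, by omega⟩ + γ' * x w')
    (a b : F) :
    (Finset.univ.filter (fun x : Fin u → F => g x = a ∧ g' x = b)).card = s ^ (u - 2) := by
  have e0w : (⟨0, by omega⟩ : Fin u) ≠ w := by
    intro h; have := congrArg Fin.val h; simp at this; omega
  have e0w' : (⟨0, by omega⟩ : Fin u) ≠ w' := by
    intro h; have := congrArg Fin.val h; simp at this; omega
  have e1w : (⟨1, by omega⟩ : Fin u) ≠ w := by
    intro h; have := congrArg Fin.val h; simp at this; omega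
  have e1w' : (⟨1, by omega⟩ : Fin u) ≠ w' := by
    intro h; have := congrArg Fin.val h; simp at this; omega
  have e10 : (⟨1, by omega⟩ : Fin u) ≠ ⟨0, by omega⟩ := by
    intro h; have := congrArg Fin.val h; simp at this
  set f : (Fin u → F) → F × F := fun x => (g x, g' x) with hf
  have hadd : ∀ x y, f (x + y) = f x + f y := by
    intro x y
    simp only [hf, hg, hg', Pi.add_apply, Prod.mk_add_mk, Prod.mk.injEq]
    constructor <;> ring
  have hsub : ∀ x y, f (x - y) = f x - f y := by
    intro x y
    have := hadd (x - y) y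
    rw [sub_add_cancel] at this
    rw [eq_sub_of_add_eq this.symm]
  have hsurj : ∀ p : F × F, ∃ x, f x = p := by
    rintro ⟨c, d⟩
    rcases hind with hne | ⟨rfl, hcase⟩
    · refine ⟨fun j => if j = w then γ⁻¹ * c else if j = w' then γ'⁻¹ * d else 0, ?_⟩
      simp only [hf, hg, hg', Prod.mk.injEq]
      simp [e0w, e0w', e1w, e1w', Ne.symm hne]
      constructor <;> field_simp
    · rcases hcase with hc | hc
      · have hd : α * γ' - α' * γ ≠ 0 := sub_ne_zero.mpr hc
        refine ⟨fun j => if j = (⟨0, by omega⟩ : Fin u) then (c * γ' - d * γ) / (α * γ' - α' * γ)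
          else if j = w then (α * d - α' * c) / (α * γ' - α' * γ) else 0, ?_⟩
        simp only [hf, hg, hg', Prod.mk.injEq]
        simp [e10, e1w, Ne.symm e0w]
        constructor
        · linear_combination c * mul_inv_cancel₀ hd
        · linear_combination d * mul_inv_cancel₀ hd
      · have hd : β * γ' - β' * γ ≠ 0 := sub_ne_zero.mpr hc
        refine ⟨fun j => if j = (⟨1, by omega⟩ : Fin u) then (c * γ' - d * γ) / (β * γ' - β' * γ)
          else if j = w then (β * d - β' * c) / (β * γ' - β' * γ) else 0, ?_⟩
        simp only [hf, hg, hg', Prod.mk.injEq]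
        simp [Ne.symm e10, e0w, Ne.symm e1w]
        constructor
        · linear_combination c * mul_inv_cancel₀ hd
        · linear_combination d * mul_inv_cancel₀ hd
  have hfib : ∀ p q : F × F,
      (Finset.univ.filter (fun x => f x = p)).card
        = (Finset.univ.filter (fun x => f x = q)).card := by
    intro p q
    obtain ⟨xp, hxp⟩ := hsurj p
    obtain ⟨xq, hxq⟩ := hsurj q
    refine Finset.card_bij' (fun x _ => x - xp + xq) (fun x _ => x - xq + xp) ?_ ?_ ?_ ?_
    · intro x hx
      simp only [Finset.mem_filter, Finset.mem_univ, true_and] at hx ⊢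
      rw [hadd, hsub, hx, hxp, hxq]; abel
    · intro x hx
      simp only [Finset.mem_filter, Finset.mem_univ, true_and] at hx ⊢
      rw [hadd, hsub, hx, hxp, hxq]; abel
    · intro x _
      show x - xp + xq - xq + xp = x
      rw [add_sub_cancel_right, sub_add_cancel]
    · intro x _
      show x - xq + xp - xp + xq = x
      rw [add_sub_cancel_right, sub_add_cancel]
  have htot : (Finset.univ : Finset (Fin u → F)).card
      = ∑ p : F × F, (Finset.univ.filter (fun x => f x = p)).card :=
    Finset.card_eq_sum_card_fiberwise (fun x _ => Finset.mem_univ _)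
  have hconst : ∀ p : F × F, (Finset.univ.filter (fun x => f x = p)).card
      = (Finset.univ.filter (fun x => f x = (a, b))).card := fun p => hfib p (a, b)
  rw [Finset.sum_congr rfl (fun p _ => hconst p), Finset.sum_const, Finset.card_univ] at htot
  have hcards : Fintype.card (Fin u → F) = s ^ u := by
    rw [Fintype.card_fun, hcard, Fintype.card_fin]
  have hFF : Fintype.card (F × F) = s ^ 2 := by
    rw [Fintype.card_prod, hcard]; ring
  rw [Finset.card_univ, hcards, hFF, smul_eq_mul] at htot
  have hs : 0 < s := by rw [← hcard]; exact Fintype.card_pos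
  have hpow : s ^ u = s ^ 2 * s ^ (u - 2) := by
    rw [← pow_add]; congr 1; omega
  have : (Finset.univ.filter (fun x => f x = (a, b))).card = s ^ (u - 2) := by
    have h2 : 0 < s ^ 2 := pow_pos hs 2
    exact Nat.eq_of_mul_eq_mul_left h2 (by omega)
  rw [← this]
  congr 1
  ext x
  simp [hf, Prod.ext_iff]


/-- Lemma 1(b): the families `R_v = {ξ₁ + μξ₂ + νξ_{v+2}} ∪ {ξ₂ + νξ_{v+2}} ∪ {ξ_{v+2}}`
(for `1 ≤ v ≤ u-2`, `μ ∈ F`, `ν ∈ F∖{0}`), indexed by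
`Option (Option F × {ν // ν ≠ 0})`, consist of pairwise distinct functions (also across
different `v`), and together form an OA(s^u, (u-2)s², s, 2). -/
theorem statement12 (F : Type) [Field F] [Fintype F] [DecidableEq F]
    (s u : ℕ) (hcard : Fintype.card F = s) (hu : 3 ≤ u)
    (R : ℕ → Option (Option F × {y : F // y ≠ 0}) → (Fin u → F) → F)
    (hR1 : ∀ (v : ℕ) (_ : 1 ≤ v) (_ : v ≤ u - 2) (μ : F) (ν : {y : F // y ≠ 0}),
      R v (some (some μ, ν)) =
        fun x => x ⟨0, by omega⟩ + μ * x ⟨1, by omega⟩ + ν.1 * x ⟨v + 1, by omega⟩)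
    (hR2 : ∀ (v : ℕ) (_ : 1 ≤ v) (_ : v ≤ u - 2) (ν : {y : F // y ≠ 0}),
      R v (some (none, ν)) = fun x => x ⟨1, by omega⟩ + ν.1 * x ⟨v + 1, by omega⟩)
    (hR3 : ∀ (v : ℕ) (_ : 1 ≤ v) (_ : v ≤ u - 2),
      R v none = fun x => x ⟨v + 1, by omega⟩) :
    (∀ (v : ℕ), 1 ≤ v → v ≤ u - 2 → ∀ (v' : ℕ), 1 ≤ v' → v' ≤ u - 2 →
      ∀ i i', (v, i) ≠ (v', i') → R v i ≠ R v' i') ∧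
    (∀ (v : ℕ), 1 ≤ v → v ≤ u - 2 → ∀ (v' : ℕ), 1 ≤ v' → v' ≤ u - 2 →
      ∀ i i', (v, i) ≠ (v', i') → ∀ a b : F,
        (Finset.univ.filter
          (fun x : Fin u → F => R v i x = a ∧ R v' i' x = b)).card = s ^ (u - 2)) := by
  have key : ∀ (v : ℕ), 1 ≤ v → v ≤ u - 2 → ∀ (v' : ℕ), 1 ≤ v' → v' ≤ u - 2 →
      ∀ i i', (v, i) ≠ (v', i') → ∀ a b : F,
        (Finset.univ.filter
          (fun x : Fin u → F => R v i x = a ∧ R v' i' x = b)).card = s ^ (u - 2) := by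
    intro v hv1 hv2 v' hv1' hv2' i i' hne a b
    have hvu : v + 1 < u := by omega
    have hvu' : v' + 1 < u := by omega
    have hor : v ≠ v' ∨ (v = v' ∧ i ≠ i') := by
      rcases eq_or_ne v v' with h | h
      · exact Or.inr ⟨h, fun hi => hne (by rw [h, hi])⟩
      · exact Or.inl h
    have hwne : v ≠ v' → (⟨v + 1, hvu⟩ : Fin u) ≠ ⟨v' + 1, hvu'⟩ := by
      intro h hh; have := congrArg Fin.val hh; simp at this; omega
    rcases i with _ | ⟨_ | μ, ν⟩ <;> rcases i' with _ | ⟨_ | μ', ν'⟩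
    -- C C
    · refine oa_count_lemma hcard hu ⟨v + 1, hvu⟩ ⟨v' + 1, hvu'⟩ (by simpa using hv1) (by simpa using hv1')
        0 0 1 0 0 1 one_ne_zero one_ne_zero ?_ _ _
        (fun x => by simp only [hR3 v hv1 hv2]; ring)
        (fun x => by simp only [hR3 v' hv1' hv2']; ring) a b
      rcases hor with h | ⟨rfl, hii⟩
      · exact Or.inl (hwne h)
      · exact absurd rfl hii
    -- C B
    · refine oa_count_lemma hcard hu ⟨v + 1, hvu⟩ ⟨v' + 1, hvu'⟩ (by simpa using hv1) (by simpa using hv1')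
        0 0 1 0 1 ν'.1 one_ne_zero ν'.2 ?_ _ _
        (fun x => by simp only [hR3 v hv1 hv2]; ring)
        (fun x => by simp only [hR2 v' hv1' hv2' ν']; ring) a b
      rcases hor with h | ⟨rfl, hii⟩
      · exact Or.inl (hwne h)
      · exact Or.inr ⟨rfl, Or.inr (by norm_num)⟩
    -- C A
    · refine oa_count_lemma hcard hu ⟨v + 1, hvu⟩ ⟨v' + 1, hvu'⟩ (by simpa using hv1) (by simpa using hv1')
        0 0 1 1 μ' ν'.1 one_ne_zero ν'.2 ?_ _ _
        (fun x => by simp only [hR3 v hv1 hv2]; ring)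
        (fun x => by simp only [hR1 v' hv1' hv2' μ' ν']; ring) a b
      rcases hor with h | ⟨rfl, hii⟩
      · exact Or.inl (hwne h)
      · exact Or.inr ⟨rfl, Or.inl (by norm_num)⟩
    -- B C
    · refine oa_count_lemma hcard hu ⟨v + 1, hvu⟩ ⟨v' + 1, hvu'⟩ (by simpa using hv1) (by simpa using hv1')
        0 1 ν.1 0 0 1 ν.2 one_ne_zero ?_ _ _
        (fun x => by simp only [hR2 v hv1 hv2 ν]; ring)
        (fun x => by simp only [hR3 v' hv1' hv2']; ring) a b
      rcases hor with h | ⟨rfl, hii⟩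
      · exact Or.inl (hwne h)
      · exact Or.inr ⟨rfl, Or.inr (by norm_num)⟩
    -- B B
    · refine oa_count_lemma hcard hu ⟨v + 1, hvu⟩ ⟨v' + 1, hvu'⟩ (by simpa using hv1) (by simpa using hv1')
        0 1 ν.1 0 1 ν'.1 ν.2 ν'.2 ?_ _ _
        (fun x => by simp only [hR2 v hv1 hv2 ν]; ring)
        (fun x => by simp only [hR2 v' hv1' hv2' ν']; ring) a b
      rcases hor with h | ⟨rfl, hii⟩
      · exact Or.inl (hwne h)
      · have hν : ν.1 ≠ ν'.1 := fun h => hii (by rw [Subtype.ext h])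
        exact Or.inr ⟨rfl, Or.inr (by simpa using Ne.symm hν)⟩
    -- B A
    · refine oa_count_lemma hcard hu ⟨v + 1, hvu⟩ ⟨v' + 1, hvu'⟩ (by simpa using hv1) (by simpa using hv1')
        0 1 ν.1 1 μ' ν'.1 ν.2 ν'.2 ?_ _ _
        (fun x => by simp only [hR2 v hv1 hv2 ν]; ring)
        (fun x => by simp only [hR1 v' hv1' hv2' μ' ν']; ring) a b
      rcases hor with h | ⟨rfl, hii⟩
      · exact Or.inl (hwne h)
      · exact Or.inr ⟨rfl, Or.inl (by simpa using Ne.symm ν.2)⟩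
    -- A C
    · refine oa_count_lemma hcard hu ⟨v + 1, hvu⟩ ⟨v' + 1, hvu'⟩ (by simpa using hv1) (by simpa using hv1')
        1 μ ν.1 0 0 1 ν.2 one_ne_zero ?_ _ _
        (fun x => by simp only [hR1 v hv1 hv2 μ ν]; ring)
        (fun x => by simp only [hR3 v' hv1' hv2']; ring) a b
      rcases hor with h | ⟨rfl, hii⟩
      · exact Or.inl (hwne h)
      · exact Or.inr ⟨rfl, Or.inl (by norm_num)⟩
    -- A B
    · refine oa_count_lemma hcard hu ⟨v + 1, hvu⟩ ⟨v' + 1, hvu'⟩ (by simpa using hv1) (by simpa using hv1')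
        1 μ ν.1 0 1 ν'.1 ν.2 ν'.2 ?_ _ _
        (fun x => by simp only [hR1 v hv1 hv2 μ ν]; ring)
        (fun x => by simp only [hR2 v' hv1' hv2' ν']; ring) a b
      rcases hor with h | ⟨rfl, hii⟩
      · exact Or.inl (hwne h)
      · exact Or.inr ⟨rfl, Or.inl (by simpa using ν'.2)⟩
    -- A A
    · refine oa_count_lemma hcard hu ⟨v + 1, hvu⟩ ⟨v' + 1, hvu'⟩ (by simpa using hv1) (by simpa using hv1')
        1 μ ν.1 1 μ' ν'.1 ν.2 ν'.2 ?_ _ _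
        (fun x => by simp only [hR1 v hv1 hv2 μ ν]; ring)
        (fun x => by simp only [hR1 v' hv1' hv2' μ' ν']; ring) a b
      rcases hor with h | ⟨rfl, hii⟩
      · exact Or.inl (hwne h)
      · refine Or.inr ⟨rfl, ?_⟩
        by_cases hν : ν.1 = ν'.1
        · have hμ : μ ≠ μ' := by
            intro hμ; exact hii (by rw [hμ, Subtype.ext hν])
          exact Or.inr (by rw [hν]; exact fun hc => hμ (mul_right_cancel₀ ν'.2 hc))
        · exact Or.inl (by simpa using fun hc => hν hc.symm)
  refine ⟨?_, key⟩
  intro v hv1 hv2 v' hv1' hv2' i i' hne heq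
  have hc := key v hv1 hv2 v' hv1' hv2' i i' hne 0 1
  have hs2 : 1 < s := hcard ▸ Fintype.one_lt_card
  have hpos : 0 < s ^ (u - 2) := pow_pos (by omega) _
  rw [← hc] at hpos
  obtain ⟨x, hx⟩ := Finset.card_pos.mp hpos
  rw [Finset.mem_filter] at hx
  have h0 : R v' i' x = 0 := heq ▸ hx.2.1
  exact one_ne_zero (hx.2.2.symm.trans h0)
end
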